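/- arXiv:2504.21642 — 13 statements merged into one kernel-verified Lean document; each statement's English description precedes it below -/
import Mathlib

section
/- Let I be a proper free ideal of ℕ and X ⊆ ℕ with X ∈ I such that X is I-translation invariant (i.e., (X + n) ∩ ℕ ∈ I for all n ∈ ℤ). Then the gap number g(X) = ∞, i.e., X has arbitrarily large gaps: for every ℓ ∈ ℕ there exist consecutive elements of the complement forming an interval of length > ℓ disjoint from X. -/
/-- If `I` is a proper free ideal of `ℕ`, `X ∈ I` and `X` is `I`-translation invariant,
then `X` has arbitrarily large gaps: for every `ℓ` there is an interval of length `> ℓ`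
disjoint from `X`. -/
theorem stmt_2 (I : Set (Set ℕ))
    (hne : I.Nonempty)
    (hunion : ∀ A B : Set ℕ, A ∈ I → B ∈ I → A ∪ B ∈ I)
    (hsubset : ∀ A B : Set ℕ, A ⊆ B → B ∈ I → A ∈ I)
    (hfree : ∀ A : Set ℕ, A.Finite → A ∈ I)
    (hproper : Set.univ ∉ I)
    (X : Set ℕ)
    (hXI : X ∈ I)
    (hXti : ∀ n : ℤ, {m : ℕ | ∃ a ∈ X, (a : ℤ) + n = (m : ℤ)} ∈ I) :
    ∀ ℓ : ℕ, ∃ a : ℕ, ∀ i ≤ ℓ, a + i ∉ X := by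
  -- each translate {m | m + i ∈ X} is in I
  have hT : ∀ i : ℕ, {m : ℕ | m + i ∈ X} ∈ I := by
    intro i
    have := hXti (-(i : ℤ))
    apply hsubset _ _ _ this
    intro m hm
    exact ⟨m + i, hm, by push_cast; ring⟩
  -- the finite union S k = {m | ∃ i ≤ k, m + i ∈ X} is in I
  have hS : ∀ k : ℕ, {m : ℕ | ∃ i ≤ k, m + i ∈ X} ∈ I := by
    intro k
    induction k with
    | zero =>
      apply hsubset _ _ _ (hT 0)
      rintro m ⟨i, hi, hx⟩
      interval_cases i
      exact hx
    | succ k ih =>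
      have := hunion _ _ ih (hT (k + 1))
      apply hsubset _ _ _ this
      rintro m ⟨i, hi, hx⟩
      rcases Nat.lt_or_ge i (k + 1) with h | h
      · exact Or.inl ⟨i, Nat.lt_succ_iff.mp h, hx⟩
      · have : i = k + 1 := le_antisymm hi h
        exact Or.inr (this ▸ hx)
  intro ℓ
  by_contra h
  push_neg at h
  apply hproper
  apply hsubset _ _ _ (hS ℓ)
  intro m _
  obtain ⟨i, hi, hx⟩ := h m
  exact ⟨i, hi, hx⟩
end

section
/- Let I be a free P-ideal of ℕ, X a first countable topological space, x ∈ X and (x_n) a sequence in X. Then (x_n) I-converges to x if and only if there exists M ⊆ ℕ with ℕ \ M ∈ I such that the subsequence (x_n)_{n ∈ M} converges to x in the usual sense. -/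
open Filter

/-- For a free P-ideal `I` of `ℕ`, a first countable space `X`, `x : X` and a sequence
`(x_n)` in `X`: `(x_n)` `I`-converges to `x` iff there is `M ⊆ ℕ` with `ℕ \ M ∈ I` such that
the subsequence `(x_n)_{n ∈ M}` converges to `x`. -/
theorem stmt_3 {X : Type*} [TopologicalSpace X] [FirstCountableTopology X]
    (I : Set (Set ℕ))
    (hne : I.Nonempty)
    (hunion : ∀ A B : Set ℕ, A ∈ I → B ∈ I → A ∪ B ∈ I)
    (hsubset : ∀ A B : Set ℕ, A ⊆ B → B ∈ I → A ∈ I)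
    (hfree : ∀ A : Set ℕ, A.Finite → A ∈ I)
    (hP : ∀ f : ℕ → Set ℕ, (∀ n, f n ∈ I) → ∃ U ∈ I, ∀ n, (f n \ U).Finite)
    (x : ℕ → X) (a : X) :
    (∀ U ∈ nhds a, {n : ℕ | x n ∉ U} ∈ I) ↔
      ∃ M : Set ℕ, Mᶜ ∈ I ∧ Tendsto x (atTop ⊓ 𝓟 M) (nhds a) := by
  constructor
  · intro h
    obtain ⟨b, hb⟩ := (nhds a).exists_antitone_basis
    have hf : ∀ k, {n : ℕ | x n ∉ b k} ∈ I := fun k => h _ (hb.mem k)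
    obtain ⟨U, hU, hUf⟩ := hP _ hf
    refine ⟨Uᶜ, by simpa using hU, ?_⟩
    intro V hV
    obtain ⟨k, -, hk⟩ := hb.toHasBasis.mem_iff.mp hV
    have hfin := hUf k
    obtain ⟨N, hN⟩ := (hfin.bddAbove).imp fun N hN => hN
    rw [Filter.mem_map]
    filter_upwards [Filter.inter_mem_inf (Filter.eventually_atTop.2
      ⟨N + 1, fun n hn => hn⟩ : _ ∈ atTop) (Filter.mem_principal_self Uᶜ)]
    rintro n ⟨hn, hnU⟩
    by_contra hx
    have hxk : n ∈ {m : ℕ | x m ∉ b k} := fun hmem => hx (hk hmem)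
    have : n ∈ {m : ℕ | x m ∉ b k} \ U := ⟨hxk, hnU⟩
    have h1 : N + 1 ≤ n := hn
    have h2 : n ≤ N := hN this
    omega
  · rintro ⟨M, hM, hT⟩ V hV
    have := hT hV
    rw [Filter.mem_map, Filter.mem_inf_iff] at this
    obtain ⟨s, hs, t, ht, hst⟩ := this
    rw [Filter.mem_principal] at ht
    obtain ⟨N, hN⟩ := Filter.mem_atTop_sets.mp hs
    have hsub : {n : ℕ | x n ∉ V} ⊆ Mᶜ ∪ {n | n < N} := by
      intro n hn
      by_cases hnM : n ∈ M
      · by_cases hN' : N ≤ n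
        · exact absurd (show n ∈ x ⁻¹' V from hst.symm ▸ Set.mem_inter (hN n hN') (ht hnM)) hn
        · exact Or.inr (Nat.lt_of_not_le hN')
      · exact Or.inl hnM
    exact hsubset _ _ hsub (hunion _ _ hM (hfree _ (Set.finite_lt_nat N)))
end

section
/- Let X be a first countable topological space, I a free P-ideal of ℕ and (x_n) a sequence in X. Then (x_n) I-converges to x if and only if for every A ⊆ ℕ with A ∉ I there exists an infinite A' ⊆ A such that (x_n)_{n ∈ A'} converges to x. -/
open Filter

/-- For a free P-ideal `I` of `ℕ` and a sequence `(x_n)` in a first countable space `X`: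
`(x_n)` `I`-converges to `x` iff for every `A ∉ I` there is an infinite `A' ⊆ A` such that
`(x_n)_{n ∈ A'}` converges to `x`. -/
theorem stmt_4 {X : Type*} [TopologicalSpace X] [FirstCountableTopology X]
    (I : Set (Set ℕ))
    (hne : I.Nonempty)
    (hunion : ∀ A B : Set ℕ, A ∈ I → B ∈ I → A ∪ B ∈ I)
    (hsubset : ∀ A B : Set ℕ, A ⊆ B → B ∈ I → A ∈ I)
    (hfree : ∀ A : Set ℕ, A.Finite → A ∈ I)
    (hP : ∀ f : ℕ → Set ℕ, (∀ n, f n ∈ I) → ∃ U ∈ I, ∀ n, (f n \ U).Finite)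
    (x : ℕ → X) (a : X) :
    (∀ U ∈ nhds a, {n : ℕ | x n ∉ U} ∈ I) ↔
      ∀ A : Set ℕ, A ∉ I → ∃ A' ⊆ A, A'.Infinite ∧ Tendsto x (atTop ⊓ 𝓟 A') (nhds a) := by
  constructor
  · intro h A hA
    obtain ⟨u, hu⟩ := (nhds a).exists_antitone_basis
    set f : ℕ → Set ℕ := fun k => {n | x n ∉ u k} with hf_def
    have hf : ∀ k, f k ∈ I := fun k => h (u k) (hu.mem k)
    obtain ⟨U, hU, hfin⟩ := hP f hf
    refine ⟨A \ U, Set.diff_subset, ?_, ?_⟩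
    · intro hfinA'
      apply hA
      have hsub : A ⊆ (A \ U) ∪ U := by
        intro n hn
        by_cases hnU : n ∈ U
        · exact Or.inr hnU
        · exact Or.inl ⟨hn, hnU⟩
      exact hsubset _ _ hsub (hunion _ _ (hfree _ hfinA') hU)
    · rw [hu.toHasBasis.tendsto_right_iff]
      intro k _
      obtain ⟨N, hN⟩ := (hfin k).bddAbove
      rw [eventually_inf_principal]
      filter_upwards [eventually_ge_atTop (N + 1)] with n hn hnA'
      by_contra hxn
      have : n ∈ f k \ U := ⟨hxn, hnA'.2⟩
      have := hN this
      omega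
  · intro h U hU
    by_contra hA
    obtain ⟨A', hA'sub, hA'inf, htend⟩ := h _ hA
    have hmem : x ⁻¹' U ∈ atTop ⊓ 𝓟 A' := htend hU
    obtain ⟨n, hn1, hn2⟩ : ((x ⁻¹' U) ∩ A').Nonempty := by
      rcases (mem_inf_iff).1 hmem with ⟨t₁, ht₁, t₂, ht₂, heq⟩
      rcases mem_atTop_sets.1 ht₁ with ⟨N, hN⟩
      obtain ⟨m, hmA', hm⟩ := hA'inf.exists_gt N
      refine ⟨m, ?_, hmA'⟩
      rw [heq]
      exact ⟨hN m hm.le, mem_principal.1 ht₂ hmA'⟩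
    exact hA'sub hn2 hn1
end

section
/- Let u be an arithmetic sequence, I a proper free ideal of ℕ, and x ∈ [0,1). If the support S = {n ≥ 1 : c_n ≠ 0} of x belongs to I and S is I-translation invariant, then u_n x (mod 1) I-converges to 0 in ℝ/ℤ, i.e., for every ε > 0 the set {n : ‖u_n x‖ ≥ ε} belongs to I, where ‖·‖ is the distance to the nearest integer. -/
/-!
Split `u n * x = A n + u n * t n`, where `A n = u n * ∑_{k ≤ n} c k / u k` is an integer because
`u k ∣ u n` for `k ≤ n`, and `t n = ∑_{k > n} c k / u k` is the tail of the expansion. As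
`c k ≤ b k - 1`, each term is at most `1 / u (k - 1) - 1 / u k`, so tails telescope:
`t n ≤ 1 / u n`. If moreover `c (n + 1) = ⋯ = c (n + m) = 0`, then
`t n = t (n + m) ≤ 1 / u (n + m)`, and `u (n + m) ≥ 2 ^ m * u n` gives `‖u n * x‖ ≤ 2 ^ (-m)`.
Hence `{n | ε ≤ ‖u n * x‖}` lies in the union of the translates `S - j`, `1 ≤ j ≤ m`, of the
support `S`, and this finite union belongs to `I`.
-/

open Finset

namespace DivisibilityChain

variable {u b c : ℕ → ℕ}

theorem pos (hmono : StrictMono u) (hb : ∀ n, u (n + 1) = b (n + 1) * u n) (n : ℕ) :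
    0 < u n := by
  refine Nat.pos_of_ne_zero fun h => ?_
  have := hmono n.lt_succ_self
  rw [hb, h, mul_zero] at this
  exact lt_irrefl 0 this

theorem two_le_ratio (hmono : StrictMono u) (hb : ∀ n, u (n + 1) = b (n + 1) * u n) (n : ℕ) :
    2 ≤ b (n + 1) := by
  have h := hmono n.lt_succ_self
  rw [hb] at h
  exact Nat.lt_of_mul_lt_mul_right (a := u n) (by rwa [one_mul])

theorem dvd_of_le (hb : ∀ n, u (n + 1) = b (n + 1) * u n) {k n : ℕ} (hkn : k ≤ n) :
    u k ∣ u n := by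
  induction n, hkn using Nat.le_induction with
  | base => exact dvd_rfl
  | succ n _ ih => exact hb n ▸ ih.trans (dvd_mul_left _ _)

theorem two_pow_mul_le (hmono : StrictMono u) (hb : ∀ n, u (n + 1) = b (n + 1) * u n)
    (n m : ℕ) : 2 ^ m * u n ≤ u (n + m) := by
  induction m with
  | zero => simp
  | succ m ih =>
    rw [← add_assoc, hb, pow_succ', mul_assoc]
    exact Nat.mul_le_mul (two_le_ratio hmono hb _) ih

/-- Indexed from `0`: `digitTerm u c k` is the term of the digit `c (k + 1)`. -/
noncomputable def digitTerm (u c : ℕ → ℕ) (k : ℕ) : ℝ := c (k + 1) / u (k + 1)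

theorem digitTerm_nonneg (k : ℕ) : 0 ≤ digitTerm u c k := by
  unfold digitTerm
  positivity

theorem digitTerm_le_sub (hmono : StrictMono u) (hb : ∀ n, u (n + 1) = b (n + 1) * u n)
    (hc : ∀ n, c (n + 1) < b (n + 1)) (n : ℕ) : digitTerm u c n ≤ 1 / u n - 1 / u (n + 1) := by
  have hu : (0 : ℝ) < u n := by exact_mod_cast pos hmono hb n
  have hcb : (c (n + 1) : ℝ) ≤ b (n + 1) - 1 := by
    rw [le_sub_iff_add_le]
    exact_mod_cast hc n
  have hb0 : (0 : ℝ) < b (n + 1) := by exact_mod_cast (two_le_ratio hmono hb n).trans_lt' two_pos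
  calc digitTerm u c n ≤ (b (n + 1) - 1) / (b (n + 1) * u n) := by
        rw [digitTerm, hb, Nat.cast_mul]
        gcongr
    _ = 1 / u n - 1 / u (n + 1) := by
        rw [hb, Nat.cast_mul]
        field_simp

theorem sum_range_digitTerm_add_le (hmono : StrictMono u)
    (hb : ∀ n, u (n + 1) = b (n + 1) * u n) (hc : ∀ n, c (n + 1) < b (n + 1)) (N M : ℕ) :
    ∑ k ∈ range M, digitTerm u c (k + N) ≤ 1 / u N := by
  have hterm (k : ℕ) : digitTerm u c (k + N) ≤ 1 / u (k + N) - 1 / u (k + 1 + N) := by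
    rw [add_right_comm]
    exact digitTerm_le_sub hmono hb hc _
  calc ∑ k ∈ range M, digitTerm u c (k + N)
      ≤ ∑ k ∈ range M, (1 / (u (k + N) : ℝ) - 1 / u (k + 1 + N)) := sum_le_sum fun k _ => hterm k
    _ = 1 / u N - 1 / u (M + N) := by rw [sum_range_sub' (fun k => 1 / (u (k + N) : ℝ)), zero_add]
    _ ≤ 1 / u N := sub_le_self _ (by positivity)

theorem summable_digitTerm (hmono : StrictMono u) (hb : ∀ n, u (n + 1) = b (n + 1) * u n)
    (hc : ∀ n, c (n + 1) < b (n + 1)) : Summable (digitTerm u c) :=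
  summable_of_sum_range_le digitTerm_nonneg
    (c := 1 / u 0) fun M => by simpa using sum_range_digitTerm_add_le hmono hb hc 0 M

theorem tsum_digitTerm_add_le (hmono : StrictMono u) (hb : ∀ n, u (n + 1) = b (n + 1) * u n)
    (hc : ∀ n, c (n + 1) < b (n + 1)) (N : ℕ) : ∑' k, digitTerm u c (k + N) ≤ 1 / u N :=
  Real.tsum_le_of_sum_range_le (fun _ => digitTerm_nonneg _)
    (sum_range_digitTerm_add_le hmono hb hc N)

theorem tsum_digitTerm_add_le_of_eq_zero (hmono : StrictMono u)
    (hb : ∀ n, u (n + 1) = b (n + 1) * u n) (hc : ∀ n, c (n + 1) < b (n + 1))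
    {n m : ℕ} (hzero : ∀ j < m, c (n + j + 1) = 0) :
    ∑' k, digitTerm u c (k + n) ≤ 1 / u (n + m) := by
  have hsummable : Summable fun k => digitTerm u c (k + n) :=
    (summable_nat_add_iff n).2 (summable_digitTerm hmono hb hc)
  have hhead : ∑ k ∈ range m, digitTerm u c (k + n) = 0 :=
    sum_eq_zero fun k hk => by
      rw [digitTerm, add_comm k n, hzero k (mem_range.1 hk), Nat.cast_zero, zero_div]
  rw [← hsummable.sum_add_tsum_nat_add m, hhead, zero_add]
  simp_rw [add_assoc, add_comm m n]
  exact tsum_digitTerm_add_le hmono hb hc (n + m)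

theorem mul_tsum_digitTerm_add_le (hmono : StrictMono u)
    (hb : ∀ n, u (n + 1) = b (n + 1) * u n) (hc : ∀ n, c (n + 1) < b (n + 1))
    {n m : ℕ} (hzero : ∀ j < m, c (n + j + 1) = 0) :
    u n * ∑' k, digitTerm u c (k + n) ≤ (1 / 2) ^ m := by
  have hu : (0 : ℝ) < u n := by exact_mod_cast pos hmono hb n
  have hgrow : (2 : ℝ) ^ m * u n ≤ u (n + m) := by exact_mod_cast two_pow_mul_le hmono hb n m
  calc u n * ∑' k, digitTerm u c (k + n) ≤ u n * (1 / u (n + m)) :=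
        mul_le_mul_of_nonneg_left (tsum_digitTerm_add_le_of_eq_zero hmono hb hc hzero) hu.le
    _ ≤ u n * (1 / (2 ^ m * u n)) := by gcongr
    _ = (1 / 2) ^ m := by rw [one_div_pow]; field_simp

theorem exists_int_mul_sum_range_digitTerm (hmono : StrictMono u)
    (hb : ∀ n, u (n + 1) = b (n + 1) * u n) (N : ℕ) :
    ∃ A : ℤ, (u N : ℝ) * ∑ k ∈ range N, digitTerm u c k = A := by
  refine ⟨(∑ k ∈ range N, c (k + 1) * (u N / u (k + 1)) : ℕ), ?_⟩
  rw [Int.cast_natCast, Nat.cast_sum, mul_sum]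
  refine sum_congr rfl fun k hk => ?_
  have hdvd : u (k + 1) ∣ u N := dvd_of_le hb (mem_range.1 hk)
  have hu : (u (k + 1) : ℝ) ≠ 0 := by exact_mod_cast (pos hmono hb (k + 1)).ne'
  rw [Nat.cast_mul, Nat.cast_div hdvd hu, digitTerm]
  field_simp

theorem abs_mul_sub_round_le (hmono : StrictMono u) (hb : ∀ n, u (n + 1) = b (n + 1) * u n)
    (hc : ∀ n, c (n + 1) < b (n + 1)) (n : ℕ) :
    |u n * ∑' k, digitTerm u c k - round (u n * ∑' k, digitTerm u c k)|
      ≤ u n * ∑' k, digitTerm u c (k + n) := by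
  obtain ⟨A, hA⟩ := exists_int_mul_sum_range_digitTerm (c := c) hmono hb n
  have hsplit : (u n : ℝ) * ∑' k, digitTerm u c k = A + u n * ∑' k, digitTerm u c (k + n) := by
    rw [← (summable_digitTerm hmono hb hc).sum_add_tsum_nat_add n, mul_add, hA]
  have htail : 0 ≤ (u n : ℝ) * ∑' k, digitTerm u c (k + n) :=
    mul_nonneg (Nat.cast_nonneg _) (tsum_nonneg fun _ => digitTerm_nonneg _)
  calc _ ≤ |(u n : ℝ) * ∑' k, digitTerm u c k - A| := round_le _ A
    _ = u n * ∑' k, digitTerm u c (k + n) := by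
        rw [hsplit, add_sub_cancel_left, abs_of_nonneg htail]

end DivisibilityChain

section IdealOfSets

variable {I : Set (Set ℕ)} {S : Set ℕ}

theorem setOf_add_mem (hsubset : ∀ A B : Set ℕ, A ⊆ B → B ∈ I → A ∈ I)
    (hS : ∀ z : ℤ, {m : ℕ | ∃ a ∈ S, (a : ℤ) + z = m} ∈ I) (k : ℕ) : {n | n + k ∈ S} ∈ I := by
  refine hsubset _ _ (fun n hn => ?_) (hS (-k))
  exact ⟨n + k, hn, by push_cast; ring⟩

theorem setOf_exists_lt_add_mem (hsubset : ∀ A B : Set ℕ, A ⊆ B → B ∈ I → A ∈ I)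
    (hS : ∀ z : ℤ, {m : ℕ | ∃ a ∈ S, (a : ℤ) + z = m} ∈ I)
    (hunion : ∀ A B : Set ℕ, A ∈ I → B ∈ I → A ∪ B ∈ I) (m : ℕ) :
    {n | ∃ j < m, n + j + 1 ∈ S} ∈ I := by
  induction m with
  | zero =>
    exact hsubset _ _ (fun n ⟨j, hj, _⟩ => absurd hj j.not_lt_zero) (setOf_add_mem hsubset hS 0)
  | succ m ih =>
    refine hsubset _ _ ?_ (hunion _ _ ih (setOf_add_mem hsubset hS (m + 1)))
    rintro n ⟨j, hj, hjS⟩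
    rcases Nat.lt_succ_iff_lt_or_eq.1 hj with hj | rfl
    · exact Or.inl ⟨j, hj, hjS⟩
    · exact Or.inr (by rwa [add_assoc] at hjS)

end IdealOfSets

open DivisibilityChain in
theorem stmt_7_general (u b c : ℕ → ℕ) (x : ℝ)
    (humono : StrictMono u)
    (hb : ∀ n, u (n + 1) = b (n + 1) * u n)
    (hsum : x = ∑' n : ℕ, (c (n + 1) : ℝ) / (u (n + 1) : ℝ))
    (hclt : ∀ n, c (n + 1) < b (n + 1))
    (I : Set (Set ℕ))
    (hunion : ∀ A B : Set ℕ, A ∈ I → B ∈ I → A ∪ B ∈ I)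
    (hsubset : ∀ A B : Set ℕ, A ⊆ B → B ∈ I → A ∈ I)
    (hSti : ∀ z : ℤ, {m : ℕ | ∃ a : ℕ, c a ≠ 0 ∧ (a : ℤ) + z = (m : ℤ)} ∈ I) :
    ∀ ε : ℝ, 0 < ε →
      {n : ℕ | ε ≤ |(u n : ℝ) * x - (round ((u n : ℝ) * x) : ℝ)|} ∈ I := by
  intro ε hε
  obtain ⟨m, hm⟩ := exists_pow_lt_of_lt_one hε (by norm_num : (1 / 2 : ℝ) < 1)
  refine hsubset _ _ (fun n hn => ?_)
    (setOf_exists_lt_add_mem hsubset (S := {a | c a ≠ 0}) hSti hunion m)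
  by_contra hnot
  simp only [Set.mem_ofPred_eq, not_exists, not_and, not_not] at hnot
  have hclose := (abs_mul_sub_round_le humono hb hclt n).trans
    (mul_tsum_digitTerm_add_le humono hb hclt hnot)
  rw [Set.mem_ofPred_eq, hsum] at hn
  exact (hm.trans_le' (hn.trans hclose)).false

/-- If `I` is a proper free ideal of `ℕ` and the support `S` of `x ∈ [0,1)` (w.r.t. an
arithmetic sequence `u`) belongs to `I` and is `I`-translation invariant, then `u_n x`
`I`-converges to `0` mod `1`: for every `ε > 0`, `{n : ‖u_n x‖ ≥ ε} ∈ I`. -/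
theorem stmt_7 (u b c : ℕ → ℕ) (x : ℝ)
    (hu0 : u 0 = 1) (humono : StrictMono u)
    (hb : ∀ n, u (n + 1) = b (n + 1) * u n)
    (hx0 : 0 ≤ x) (hx1 : x < 1)
    (hc0 : c 0 = 0)
    (hsum : x = ∑' n : ℕ, (c (n + 1) : ℝ) / (u (n + 1) : ℝ))
    (hclt : ∀ n, c (n + 1) < b (n + 1))
    (hcinf : {n : ℕ | c (n + 1) + 1 < b (n + 1)}.Infinite)
    (I : Set (Set ℕ))
    (hne : I.Nonempty)
    (hunion : ∀ A B : Set ℕ, A ∈ I → B ∈ I → A ∪ B ∈ I)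
    (hsubset : ∀ A B : Set ℕ, A ⊆ B → B ∈ I → A ∈ I)
    (hfree : ∀ A : Set ℕ, A.Finite → A ∈ I)
    (hproper : Set.univ ∉ I)
    (hS : {n : ℕ | c n ≠ 0} ∈ I)
    (hSti : ∀ z : ℤ, {m : ℕ | ∃ a : ℕ, c a ≠ 0 ∧ (a : ℤ) + z = (m : ℤ)} ∈ I) :
    ∀ ε : ℝ, 0 < ε →
      {n : ℕ | ε ≤ |(u n : ℝ) * x - (round ((u n : ℝ) * x) : ℝ)|} ∈ I :=
  stmt_7_general u b c x humono hb hsum hclt I hunion hsubset hSti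
end

section
/- Let u be an arithmetic sequence with ratios b_n and let I be a free P-ideal of ℕ. If A ∉ I and every b-bounded subset of A belongs to I (a set is b-bounded if it is infinite and (b_n)_{n ∈ A'} is bounded), then there exists B ⊆ A with A \ B ∈ I such that B is b-divergent, i.e., b_n → ∞ along B. -/
open Filter

/-- If `I` is a free P-ideal of `ℕ`, `A ∉ I` and every `b`-bounded subset of `A` belongs
to `I`, then there is `B ⊆ A` with `A \ B ∈ I` such that `b_n → ∞` along `B`. -/
theorem stmt_8 (u b : ℕ → ℕ)
    (hu0 : u 0 = 1) (humono : StrictMono u)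
    (hb : ∀ n, u (n + 1) = b (n + 1) * u n)
    (I : Set (Set ℕ))
    (hne : I.Nonempty)
    (hunion : ∀ A B : Set ℕ, A ∈ I → B ∈ I → A ∪ B ∈ I)
    (hsubset : ∀ A B : Set ℕ, A ⊆ B → B ∈ I → A ∈ I)
    (hfree : ∀ A : Set ℕ, A.Finite → A ∈ I)
    (hP : ∀ f : ℕ → Set ℕ, (∀ n, f n ∈ I) → ∃ U ∈ I, ∀ n, (f n \ U).Finite)
    (A : Set ℕ) (hA : A ∉ I)
    (hbb : ∀ A' ⊆ A, A'.Infinite → (∃ M : ℕ, ∀ n ∈ A', b n ≤ M) → A' ∈ I) :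
    ∃ B ⊆ A, A \ B ∈ I ∧ Tendsto b (atTop ⊓ 𝓟 B) atTop := by
  set f : ℕ → Set ℕ := fun M => {n ∈ A | b n ≤ M} with hf
  have hfI : ∀ M, f M ∈ I := by
    intro M
    by_cases h : (f M).Infinite
    · exact hbb _ (fun n hn => hn.1) h ⟨M, fun n hn => hn.2⟩
    · exact hfree _ (Set.not_infinite.mp h)
  obtain ⟨U, hU, hfin⟩ := hP f hfI
  refine ⟨A \ U, Set.diff_subset, ?_, ?_⟩
  · exact hsubset _ U (fun x hx => by
      simp only [Set.mem_diff, Set.mem_diff, not_and, not_not] at hx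
      exact hx.2 hx.1) hU
  · rw [tendsto_atTop]
    intro M
    rw [eventually_inf_principal]
    obtain ⟨N, hN⟩ := (hfin M).bddAbove
    filter_upwards [eventually_gt_atTop N] with n hn hnB
    by_contra hc
    push_neg at hc
    have : n ∈ f M \ U := ⟨⟨hnB.1, Nat.le_of_lt_succ (Nat.lt_succ_of_lt hc)⟩, hnB.2⟩
    exact absurd (hN this) (not_le.mpr hn)
end

section
/- Let u be an arithmetic sequence with ratios b_n, I a free ideal of ℕ, x ∈ [0,1) with canonical coefficients c_n, support S = supp(x) and S_b = {n : c_n = b_n − 1}. Let B ∉ I be such that u_{n−1}x → 0 (mod 1) along n ∈ B. If B \ S ∈ I and B is b-bounded, then: (1) B ∩ S ⊆_I B; (2) {u_{n−1}x} → 1 for n ∈ B ∩ S; (3) B ∩ S is almost contained in S_b (the difference is finite). -/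
open Filter

open Filter Finset

namespace S9

/-- The `k`-th term of the tail series after index `n`, scaled by `u n`. -/
noncomputable def Ct (u c : ℕ → ℕ) (n k : ℕ) : ℝ :=
  (u n : ℝ) * ((c (k + n + 1) : ℝ) / (u (k + n + 1) : ℝ))

/-- The scaled tail `∑_{k>n} c_k u_n / u_k`. -/
noncomputable def tl (u c : ℕ → ℕ) (n : ℕ) : ℝ := ∑' k, Ct u c n k

variable {u b c : ℕ → ℕ}

lemma upos (hu0 : u 0 = 1) (humono : StrictMono u) (n : ℕ) : 0 < u n := by
  have := humono.monotone (Nat.zero_le n); omega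

lemma urpos (hu0 : u 0 = 1) (humono : StrictMono u) (n : ℕ) : (0:ℝ) < (u n : ℝ) := by
  exact_mod_cast upos hu0 humono n

lemma b2 (hu0 : u 0 = 1) (humono : StrictMono u) (hb : ∀ n, u (n + 1) = b (n + 1) * u n)
    (n : ℕ) : 2 ≤ b (n + 1) := by
  have h1 := upos hu0 humono n
  have h2 := humono (Nat.lt_succ_self n)
  rw [hb n] at h2
  rcases Nat.lt_or_ge (b (n+1)) 2 with h | h
  · interval_cases (b (n+1)) <;> omega
  · exact h

lemma udvd (hb : ∀ n, u (n + 1) = b (n + 1) * u n) {m n : ℕ} (h : m ≤ n) : u m ∣ u n := by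
  induction n with
  | zero => simpa [Nat.le_zero.mp h]
  | succ n ih =>
    rcases Nat.lt_or_ge m (n+1) with h1 | h1
    · exact (ih (by omega)).trans (by rw [hb n]; exact dvd_mul_left _ _)
    · have : m = n + 1 := by omega
      subst this; rfl

lemma Ct_nonneg (n k : ℕ) : 0 ≤ Ct u c n k := by
  unfold Ct; positivity

lemma telescope (hu0 : u 0 = 1) (humono : StrictMono u)
    (hb : ∀ n, u (n + 1) = b (n + 1) * u n) (n K : ℕ) :
    ∑ k ∈ range K, ((b (k + n + 1) : ℝ) - 1) * ((u n : ℝ) / (u (k + n + 1) : ℝ))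
      = 1 - (u n : ℝ) / (u (K + n) : ℝ) := by
  induction K with
  | zero =>
    simp [Nat.zero_add, div_self (ne_of_gt (urpos hu0 humono n))]
  | succ K ih =>
    rw [Finset.sum_range_succ, ih]
    have hrw : K + 1 + n = K + n + 1 := by omega
    rw [hrw]
    have hbu : (u (K + n + 1) : ℝ) = (b (K + n + 1) : ℝ) * (u (K + n) : ℝ) := by
      exact_mod_cast hb (K + n)
    have h1 : (u (K + n) : ℝ) ≠ 0 := ne_of_gt (urpos hu0 humono _)
    have h2 : (b (K + n + 1) : ℝ) ≠ 0 := by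
      have := b2 hu0 humono hb (K + n); positivity
    rw [hbu]
    field_simp
    ring

lemma Ct_le (hu0 : u 0 = 1) (humono : StrictMono u) (hclt : ∀ n, c (n + 1) < b (n + 1))
    (n k : ℕ) :
    Ct u c n k ≤ ((b (k + n + 1) : ℝ) - 1) * ((u n : ℝ) / (u (k + n + 1) : ℝ)) := by
  have h1 : Ct u c n k = (c (k + n + 1) : ℝ) * ((u n : ℝ) / (u (k + n + 1) : ℝ)) := by
    unfold Ct; ring
  rw [h1]
  have h2 : (c (k + n + 1) : ℝ) ≤ (b (k + n + 1) : ℝ) - 1 := by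
    have := hclt (k + n); rw [le_sub_iff_add_le]; exact_mod_cast this
  exact mul_le_mul_of_nonneg_right h2 (by positivity)

lemma partial_le (hu0 : u 0 = 1) (humono : StrictMono u)
    (hb : ∀ n, u (n + 1) = b (n + 1) * u n) (hclt : ∀ n, c (n + 1) < b (n + 1)) (n K : ℕ) :
    ∑ k ∈ range K, Ct u c n k ≤ 1 - (u n : ℝ) / (u (K + n) : ℝ) := by
  calc ∑ k ∈ range K, Ct u c n k
      ≤ ∑ k ∈ range K, ((b (k + n + 1) : ℝ) - 1) * ((u n : ℝ) / (u (k + n + 1) : ℝ)) :=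
        Finset.sum_le_sum fun k _ => Ct_le hu0 humono hclt n k
    _ = 1 - (u n : ℝ) / (u (K + n) : ℝ) := telescope hu0 humono hb n K

lemma partial_le_one (hu0 : u 0 = 1) (humono : StrictMono u)
    (hb : ∀ n, u (n + 1) = b (n + 1) * u n) (hclt : ∀ n, c (n + 1) < b (n + 1)) (n K : ℕ) :
    ∑ k ∈ range K, Ct u c n k ≤ 1 := by
  refine (partial_le hu0 humono hb hclt n K).trans ?_
  have h1 : (0:ℝ) < (u n : ℝ) / (u (K + n) : ℝ) := by
    have := urpos hu0 humono n; have := urpos hu0 humono (K + n); positivity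
  linarith

lemma summable_Ct (hu0 : u 0 = 1) (humono : StrictMono u)
    (hb : ∀ n, u (n + 1) = b (n + 1) * u n) (hclt : ∀ n, c (n + 1) < b (n + 1)) (n : ℕ) :
    Summable (Ct u c n) :=
  summable_of_sum_range_le (fun k => Ct_nonneg n k) (partial_le_one hu0 humono hb hclt n)

lemma tl_nonneg (n : ℕ) : 0 ≤ tl u c n := tsum_nonneg fun k => Ct_nonneg n k

lemma tl_le_one (hu0 : u 0 = 1) (humono : StrictMono u)
    (hb : ∀ n, u (n + 1) = b (n + 1) * u n) (hclt : ∀ n, c (n + 1) < b (n + 1)) (n : ℕ) :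
    tl u c n ≤ 1 :=
  Real.tsum_le_of_sum_range_le (fun k => Ct_nonneg n k) (partial_le_one hu0 humono hb hclt n)

lemma Ct_zero (hu0 : u 0 = 1) (humono : StrictMono u)
    (hb : ∀ n, u (n + 1) = b (n + 1) * u n) (n : ℕ) :
    Ct u c n 0 = (c (n + 1) : ℝ) / (b (n + 1) : ℝ) := by
  unfold Ct
  rw [Nat.zero_add]
  have hbu : (u (n + 1) : ℝ) = (b (n + 1) : ℝ) * (u n : ℝ) := by exact_mod_cast hb n
  have h1 : (u n : ℝ) ≠ 0 := ne_of_gt (urpos hu0 humono n)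
  have h2 : (b (n + 1) : ℝ) ≠ 0 := by have := b2 hu0 humono hb n; positivity
  rw [hbu]
  field_simp

lemma tl_ge (hu0 : u 0 = 1) (humono : StrictMono u)
    (hb : ∀ n, u (n + 1) = b (n + 1) * u n) (hclt : ∀ n, c (n + 1) < b (n + 1)) (n : ℕ) :
    (c (n + 1) : ℝ) / (b (n + 1) : ℝ) ≤ tl u c n := by
  rw [← Ct_zero hu0 humono hb n]
  exact Summable.le_tsum (summable_Ct hu0 humono hb hclt n) 0 fun j _ => Ct_nonneg n j

lemma tl_lt_one (hu0 : u 0 = 1) (humono : StrictMono u)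
    (hb : ∀ n, u (n + 1) = b (n + 1) * u n) (hclt : ∀ n, c (n + 1) < b (n + 1))
    (hcinf : {n : ℕ | c (n + 1) + 1 < b (n + 1)}.Infinite) (n : ℕ) :
    tl u c n < 1 := by
  obtain ⟨j, hjmem, hjn⟩ := hcinf.exists_gt n
  have hjm : c (j + 1) + 1 < b (j + 1) := hjmem
  set k₀ := j - n with hk0
  have hke : k₀ + n + 1 = j + 1 := by omega
  have key : ∀ K, ∑ k ∈ range K, Ct u c n k ≤ 1 - (u n : ℝ) / (u (j + 1) : ℝ) := by
    intro K
    have humon : ∀ {a a' : ℕ}, a ≤ a' → (u a : ℝ) ≤ (u a' : ℝ) := fun h =>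
      Nat.cast_le.mpr (humono.monotone h)
    rcases le_or_gt K k₀ with hK | hK
    · refine (partial_le hu0 humono hb hclt n K).trans ?_
      have h1 : (u n : ℝ) / (u (j + 1) : ℝ) ≤ (u n : ℝ) / (u (K + n) : ℝ) :=
        div_le_div_of_nonneg_left (le_of_lt (urpos hu0 humono n))
          (urpos hu0 humono (K + n)) (humon (by omega))
      linarith
    · set D : ℕ → ℝ := fun k =>
        ((b (k + n + 1) : ℝ) - 1) * ((u n : ℝ) / (u (k + n + 1) : ℝ)) - Ct u c n k with hD
      have hDnn : ∀ k ∈ range K, 0 ≤ D k := fun k _ =>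
        sub_nonneg.2 (Ct_le hu0 humono hclt n k)
      have hsingle : D k₀ ≤ ∑ k ∈ range K, D k :=
        Finset.single_le_sum hDnn (mem_range.2 hK)
      have hDk0 : (u n : ℝ) / (u (j + 1) : ℝ) ≤ D k₀ := by
        rw [hD]
        simp only [hke]
        have h1 : Ct u c n k₀ = (c (j + 1) : ℝ) * ((u n : ℝ) / (u (j + 1) : ℝ)) := by
          unfold Ct; rw [hke]; ring
        rw [h1]
        have h2 : (c (j + 1) : ℝ) ≤ (b (j + 1) : ℝ) - 2 := by
          rw [le_sub_iff_add_le]; exact_mod_cast hjm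
        have h3 : (0:ℝ) ≤ (u n : ℝ) / (u (j + 1) : ℝ) := by
          have := urpos hu0 humono n; have := urpos hu0 humono (j + 1); positivity
        nlinarith
      have hsum2 : ∑ k ∈ range K, D k
          = (1 - (u n : ℝ) / (u (K + n) : ℝ)) - ∑ k ∈ range K, Ct u c n k := by
        rw [hD, Finset.sum_sub_distrib, telescope hu0 humono hb n K]
      have h4 : (0:ℝ) < (u n : ℝ) / (u (K + n) : ℝ) := by
        have := urpos hu0 humono n; have := urpos hu0 humono (K + n); positivity
      have h5 := hDk0.trans hsingle
      rw [hsum2] at h5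
      linarith
  have h5 := Real.tsum_le_of_sum_range_le (fun k => Ct_nonneg (u := u) (c := c) n k) key
  have h6 : (0:ℝ) < (u n : ℝ) / (u (j + 1) : ℝ) := by
    have := urpos hu0 humono n; have := urpos hu0 humono (j + 1); positivity
  exact lt_of_le_of_lt h5 (by linarith)

lemma fract_eq (hu0 : u 0 = 1) (humono : StrictMono u)
    (hb : ∀ n, u (n + 1) = b (n + 1) * u n) (hclt : ∀ n, c (n + 1) < b (n + 1))
    (hcinf : {n : ℕ | c (n + 1) + 1 < b (n + 1)}.Infinite)
    {x : ℝ} (hsum : x = ∑' n : ℕ, (c (n + 1) : ℝ) / (u (n + 1) : ℝ)) (n : ℕ) :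
    Int.fract ((u n : ℝ) * x) = tl u c n := by
  have hf : Summable (fun m : ℕ => (c (m + 1) : ℝ) / (u (m + 1) : ℝ)) := by
    have h0 := summable_Ct hu0 humono hb hclt (c := c) 0
    have he : Ct u c 0 = fun m : ℕ => (c (m + 1) : ℝ) / (u (m + 1) : ℝ) := by
      funext k; unfold Ct; rw [hu0]; rw [Nat.add_zero]; push_cast; ring
    rwa [he] at h0
  have hg : Summable (fun m : ℕ => (u n : ℝ) * ((c (m + 1) : ℝ) / (u (m + 1) : ℝ))) :=
    hf.mul_left _
  have h1 : (u n : ℝ) * x = ∑' m, (u n : ℝ) * ((c (m + 1) : ℝ) / (u (m + 1) : ℝ)) := by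
    rw [hsum, tsum_mul_left]
  have h2 := Summable.sum_add_tsum_nat_add
    (f := fun m : ℕ => (u n : ℝ) * ((c (m + 1) : ℝ) / (u (m + 1) : ℝ))) n hg
  have h3 : (∑' k : ℕ, (u n : ℝ) * ((c (k + n + 1) : ℝ) / (u (k + n + 1) : ℝ))) = tl u c n := rfl
  have h4 : ∑ m ∈ range n, (u n : ℝ) * ((c (m + 1) : ℝ) / (u (m + 1) : ℝ))
      = ((∑ m ∈ range n, c (m + 1) * (u n / u (m + 1)) : ℕ) : ℝ) := by
    rw [Nat.cast_sum]
    refine Finset.sum_congr rfl fun m hm => ?_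
    have hd : u (m + 1) ∣ u n := udvd hb (by have := mem_range.mp hm; omega)
    rw [Nat.cast_mul, Nat.cast_div hd (by exact_mod_cast ne_of_gt (urpos hu0 humono (m+1)))]
    ring
  have h5 : (u n : ℝ) * x
      = ((∑ m ∈ range n, c (m + 1) * (u n / u (m + 1)) : ℕ) : ℝ) + tl u c n := by
    rw [h1, ← h2, h4, h3]
  rw [h5]
  have h6 : (((∑ m ∈ range n, c (m + 1) * (u n / u (m + 1)) : ℕ) : ℤ) : ℝ)
      = ((∑ m ∈ range n, c (m + 1) * (u n / u (m + 1)) : ℕ) : ℝ) :=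
    Int.cast_natCast _
  rw [← h6, Int.fract_intCast_add]
  exact Int.fract_eq_self.mpr ⟨tl_nonneg n, tl_lt_one hu0 humono hb hclt hcinf n⟩

lemma tl_le_ub (hu0 : u 0 = 1) (humono : StrictMono u)
    (hb : ∀ n, u (n + 1) = b (n + 1) * u n) (hclt : ∀ n, c (n + 1) < b (n + 1)) (n : ℕ) :
    tl u c n ≤ ((c (n + 1) : ℝ) + 1) / (b (n + 1) : ℝ) := by
  have h0 : tl u c n = Ct u c n 0 + ∑' k, Ct u c n (k + 1) :=
    Summable.tsum_eq_zero_add (summable_Ct hu0 humono hb hclt n)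
  have hbu : (u (n + 1) : ℝ) = (b (n + 1) : ℝ) * (u n : ℝ) := by exact_mod_cast hb n
  have hun : (u n : ℝ) ≠ 0 := ne_of_gt (urpos hu0 humono n)
  have hun1 : (u (n + 1) : ℝ) ≠ 0 := ne_of_gt (urpos hu0 humono (n + 1))
  have hbn : (0:ℝ) < (b (n + 1) : ℝ) := by
    have := b2 hu0 humono hb n
    have : (2:ℝ) ≤ (b (n + 1) : ℝ) := by exact_mod_cast this
    linarith
  have h1 : ∀ k : ℕ, Ct u c n (k + 1) = ((u n : ℝ) / (u (n + 1) : ℝ)) * Ct u c (n + 1) k := by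
    intro k
    unfold Ct
    have he : k + 1 + n + 1 = k + (n + 1) + 1 := by omega
    rw [he]
    have hk : (u (k + (n + 1) + 1) : ℝ) ≠ 0 := ne_of_gt (urpos hu0 humono _)
    field_simp
  have h2 : (∑' k, Ct u c n (k + 1)) = ((u n : ℝ) / (u (n + 1) : ℝ)) * tl u c (n + 1) := by
    rw [tsum_congr h1, tsum_mul_left]; rfl
  have h3 : tl u c (n + 1) ≤ 1 := tl_le_one hu0 humono hb hclt (n + 1)
  have h3' : 0 ≤ tl u c (n + 1) := tl_nonneg (n + 1)
  have h4 : (u n : ℝ) / (u (n + 1) : ℝ) = 1 / (b (n + 1) : ℝ) := by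
    rw [hbu, mul_comm, ← div_div, div_self hun]
  rw [h0, h2, h4, Ct_zero hu0 humono hb n, add_div]
  have h5 : 1 / (b (n + 1) : ℝ) * tl u c (n + 1) ≤ 1 / (b (n + 1) : ℝ) :=
    mul_le_of_le_one_right (by positivity) h3
  linarith

end S9

open S9 in
/-- Lemma 2.7(a): if `B ∉ I`, `u_{n-1} x → 0 (mod 1)` along `B`, `B \ S ∈ I` and `B` is
`b`-bounded, then `B ∩ S ⊆_I B`, `{u_{n-1} x} → 1` along `B ∩ S`, and `B ∩ S ⊆* S_b`. -/
theorem stmt_9 (u b c : ℕ → ℕ) (x : ℝ)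
    (hu0 : u 0 = 1) (humono : StrictMono u)
    (hb : ∀ n, u (n + 1) = b (n + 1) * u n)
    (hx0 : 0 ≤ x) (hx1 : x < 1)
    (hc0 : c 0 = 0)
    (hsum : x = ∑' n : ℕ, (c (n + 1) : ℝ) / (u (n + 1) : ℝ))
    (hclt : ∀ n, c (n + 1) < b (n + 1))
    (hcinf : {n : ℕ | c (n + 1) + 1 < b (n + 1)}.Infinite)
    (I : Set (Set ℕ))
    (hne : I.Nonempty)
    (hunion : ∀ A B : Set ℕ, A ∈ I → B ∈ I → A ∪ B ∈ I)
    (hsubset : ∀ A B : Set ℕ, A ⊆ B → B ∈ I → A ∈ I)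
    (hfree : ∀ A : Set ℕ, A.Finite → A ∈ I)
    (B : Set ℕ) (hB : B ∉ I)
    (hconv : Tendsto (fun n : ℕ => |(u (n - 1) : ℝ) * x - (round ((u (n - 1) : ℝ) * x) : ℝ)|)
      (atTop ⊓ 𝓟 B) (nhds 0))
    (hBS : B \ {n : ℕ | c n ≠ 0} ∈ I)
    (hbdd : ∃ M : ℕ, ∀ n ∈ B, b n ≤ M) :
    (B ∩ {n : ℕ | c n ≠ 0} ⊆ B ∧ B \ (B ∩ {n : ℕ | c n ≠ 0}) ∈ I) ∧
    Tendsto (fun n : ℕ => Int.fract ((u (n - 1) : ℝ) * x))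
      (atTop ⊓ 𝓟 (B ∩ {n : ℕ | c n ≠ 0})) (nhds 1) ∧
    ((B ∩ {n : ℕ | c n ≠ 0}) \ {n : ℕ | c n + 1 = b n}).Finite := by
  have hpart1 : B ∩ {n : ℕ | c n ≠ 0} ⊆ B ∧ B \ (B ∩ {n : ℕ | c n ≠ 0}) ∈ I := by
    refine ⟨Set.inter_subset_left, ?_⟩
    have hset : B \ (B ∩ {n : ℕ | c n ≠ 0}) = B \ {n : ℕ | c n ≠ 0} := by
      ext n; simp only [Set.mem_diff, Set.mem_inter_iff, Set.mem_setOf_eq]; tauto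
    rw [hset]; exact hBS
  obtain ⟨M, hM⟩ := hbdd
  have hMr : ∀ n ∈ B, (b n : ℝ) ≤ (M : ℝ) + 1 := by
    intro n hn
    have := hM n hn
    have : (b n : ℝ) ≤ (M : ℝ) := by exact_mod_cast this
    linarith
  have hεpos : (0:ℝ) < 1 / ((M:ℝ) + 1) := by positivity
  set F := atTop ⊓ 𝓟 (B ∩ {n : ℕ | c n ≠ 0}) with hF
  have hle : F ≤ atTop ⊓ 𝓟 B := inf_le_inf_left _ (principal_mono.2 Set.inter_subset_left)
  have hconv2 := hconv.mono_left hle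
  have hmem : ∀ᶠ n in F, n ∈ B ∩ {n : ℕ | c n ≠ 0} := by
    rw [hF, eventually_inf_principal]
    exact Eventually.of_forall fun n hn => hn
  have hkey : ∀ n ∈ B ∩ {n : ℕ | c n ≠ 0},
      Int.fract ((u (n - 1) : ℝ) * x) = tl u c (n - 1) ∧
        1 / ((M:ℝ) + 1) ≤ tl u c (n - 1) := by
    rintro n ⟨hnB, hnS⟩
    have hnS' : c n ≠ 0 := hnS
    have hn0 : n ≠ 0 := by intro h; subst h; exact hnS' hc0
    obtain ⟨m, rfl⟩ : ∃ m, n = m + 1 := ⟨n - 1, by omega⟩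
    simp only [Nat.add_sub_cancel]
    refine ⟨fract_eq hu0 humono hb hclt hcinf hsum m, ?_⟩
    have hc1 : (1:ℝ) ≤ (c (m + 1) : ℝ) := by
      have : 1 ≤ c (m + 1) := Nat.one_le_iff_ne_zero.2 hnS'
      exact_mod_cast this
    have hbpos : (0:ℝ) < (b (m + 1) : ℝ) := by
      have := b2 hu0 humono hb m
      have : (2:ℝ) ≤ (b (m + 1) : ℝ) := by exact_mod_cast this
      linarith
    have h1 : (1:ℝ) / ((M:ℝ) + 1) ≤ (c (m + 1) : ℝ) / (b (m + 1) : ℝ) :=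
      div_le_div₀ (by linarith) hc1 hbpos (hMr _ hnB)
    exact h1.trans (tl_ge hu0 humono hb hclt m)
  have hev1 : ∀ᶠ n in F,
      |(u (n - 1) : ℝ) * x - (round ((u (n - 1) : ℝ) * x) : ℝ)| < 1 / ((M:ℝ) + 1) :=
    hconv2.eventually_lt_const hεpos
  have hevle : ∀ᶠ n in F, ‖Int.fract ((u (n - 1) : ℝ) * x) - 1‖ ≤
      |(u (n - 1) : ℝ) * x - (round ((u (n - 1) : ℝ) * x) : ℝ)| := by
    filter_upwards [hev1, hmem] with n h1 h2
    obtain ⟨hfe, hge⟩ := hkey n h2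
    set y := (u (n - 1) : ℝ) * x with hy
    have hmin : |y - (round y : ℝ)| = min (Int.fract y) (1 - Int.fract y) :=
      abs_sub_round_eq_min y
    have hlt1 : Int.fract y < 1 := Int.fract_lt_one y
    have h3 : |y - (round y : ℝ)| = 1 - Int.fract y := by
      rcases min_cases (Int.fract y) (1 - Int.fract y) with ⟨hmm, _⟩ | ⟨hmm, _⟩
      · exfalso
        rw [hmin, hmm, hfe] at h1
        linarith
      · rw [hmin, hmm]
    rw [h3, Real.norm_eq_abs, abs_sub_comm,
      abs_of_nonneg (by linarith : (0:ℝ) ≤ 1 - Int.fract y)]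
  have hpart2 : Tendsto (fun n : ℕ => Int.fract ((u (n - 1) : ℝ) * x)) F (nhds 1) := by
    have h0 : Tendsto (fun n : ℕ => Int.fract ((u (n - 1) : ℝ) * x) - 1) F (nhds 0) :=
      squeeze_zero_norm' hevle hconv2
    have h1 := h0.add_const 1
    simpa using h1
  refine ⟨hpart1, hpart2, ?_⟩
  have hev2 : ∀ᶠ n in F, 1 - 1 / ((M:ℝ) + 1) < Int.fract ((u (n - 1) : ℝ) * x) :=
    hpart2.eventually_const_lt (by linarith)
  have hev3 : ∀ᶠ n in F, c n + 1 = b n := by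
    filter_upwards [hev2, hmem] with n h1 h2
    obtain ⟨hnB, hnS⟩ := h2
    have hnS' : c n ≠ 0 := hnS
    have hn0 : n ≠ 0 := by intro h; subst h; exact hnS' hc0
    obtain ⟨m, rfl⟩ : ∃ m, n = m + 1 := ⟨n - 1, by omega⟩
    by_contra hne
    have hlt : c (m + 1) + 2 ≤ b (m + 1) := by have := hclt m; omega
    have hfe := (hkey (m + 1) ⟨hnB, hnS⟩).1
    simp only [Nat.add_sub_cancel] at hfe h1
    rw [hfe] at h1
    have hub := tl_le_ub hu0 humono hb hclt m
    have hbM : (b (m + 1) : ℝ) ≤ (M:ℝ) + 1 := hMr _ hnB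
    have hbpos : (0:ℝ) < (b (m + 1) : ℝ) := by
      have := b2 hu0 humono hb m
      have : (2:ℝ) ≤ (b (m + 1) : ℝ) := by exact_mod_cast this
      linarith
    have hcr : (c (m + 1) : ℝ) + 2 ≤ (b (m + 1) : ℝ) := by exact_mod_cast hlt
    have e1 : ((c (m + 1) : ℝ) + 1) / (b (m + 1) : ℝ)
        ≤ ((b (m + 1) : ℝ) - 1) / (b (m + 1) : ℝ) := by
      gcongr
      · linarith
    have e2 : ((b (m + 1) : ℝ) - 1) / (b (m + 1) : ℝ) = 1 - 1 / (b (m + 1) : ℝ) := by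
      field_simp
    have e3 : 1 / ((M:ℝ) + 1) ≤ 1 / (b (m + 1) : ℝ) :=
      one_div_le_one_div_of_le hbpos hbM
    linarith
  rw [hF, eventually_inf_principal, eventually_atTop] at hev3
  obtain ⟨a, ha⟩ := hev3
  apply Set.Finite.subset (Set.finite_Iio a)
  rintro n ⟨hn1, hn2⟩
  simp only [Set.mem_Iio]
  by_contra h
  exact hn2 (ha n (by omega) hn1)
end

section
/- Let u be an arithmetic sequence with ratios b_n, let I be a translation invariant free P-ideal of ℕ, and let x ∈ [0,1) with canonical coefficients c_n. Suppose that for every A ∉ I that is b-divergent there exists B ⊆_I A with lim_{n∈B} c_n/b_n = 0 in ℝ/ℤ. Then for every b-divergent A ∉ I there exists B ⊆_I A such that u_{n−1}x → 0 (mod 1) along n ∈ B. -/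
open Filter

set_option maxHeartbeats 1000000 in
/-- Lemma (b_x ⟹ U_A for b-divergent A): assume that for every b-divergent `A ∉ I` there is
`B ⊆_I A` with `c_n / b_n → 0` in `ℝ/ℤ` along `B`. Then for every b-divergent `A ∉ I` there
is `B ⊆_I A` with `u_{n-1} x → 0 (mod 1)` along `B`. -/
theorem stmt_11 (u b c : ℕ → ℕ) (x : ℝ)
    (hu0 : u 0 = 1) (humono : StrictMono u)
    (hb : ∀ n, u (n + 1) = b (n + 1) * u n)
    (hx0 : 0 ≤ x) (hx1 : x < 1)
    (hc0 : c 0 = 0)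
    (hsum : x = ∑' n : ℕ, (c (n + 1) : ℝ) / (u (n + 1) : ℝ))
    (hclt : ∀ n, c (n + 1) < b (n + 1))
    (hcinf : {n : ℕ | c (n + 1) + 1 < b (n + 1)}.Infinite)
    (I : Set (Set ℕ))
    (hne : I.Nonempty)
    (hunion : ∀ A B : Set ℕ, A ∈ I → B ∈ I → A ∪ B ∈ I)
    (hsubset : ∀ A B : Set ℕ, A ⊆ B → B ∈ I → A ∈ I)
    (hfree : ∀ A : Set ℕ, A.Finite → A ∈ I)
    (hP : ∀ f : ℕ → Set ℕ, (∀ n, f n ∈ I) → ∃ U ∈ I, ∀ n, (f n \ U).Finite)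
    (htrans : ∀ A ∈ I, ∀ z : ℤ, {m : ℕ | ∃ a ∈ A, (a : ℤ) + z = (m : ℤ)} ∈ I)
    (hbx : ∀ A : Set ℕ, A ∉ I → Tendsto b (atTop ⊓ 𝓟 A) atTop →
      ∃ B ⊆ A, A \ B ∈ I ∧
        Tendsto (fun n : ℕ => |(c n : ℝ) / (b n : ℝ) -
          (round ((c n : ℝ) / (b n : ℝ)) : ℝ)|) (atTop ⊓ 𝓟 B) (nhds 0)) :
    ∀ A : Set ℕ, A ∉ I → Tendsto b (atTop ⊓ 𝓟 A) atTop →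
      ∃ B ⊆ A, A \ B ∈ I ∧
        Tendsto (fun n : ℕ => |(u (n - 1) : ℝ) * x - (round ((u (n - 1) : ℝ) * x) : ℝ)|)
          (atTop ⊓ 𝓟 B) (nhds 0) := by
  intro A hA hAdiv
  obtain ⟨B, hBA, hABI, hBtend⟩ := hbx A hA hAdiv
  refine ⟨B, hBA, hABI, ?_⟩
  -- basic positivity facts
  have hupos : ∀ n, 0 < u n := fun n => by
    have : u 0 ≤ u n := humono.monotone (Nat.zero_le n)
    omega
  have huposR : ∀ n, (0:ℝ) < (u n : ℝ) := fun n => by exact_mod_cast hupos n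
  have hb2 : ∀ n, 2 ≤ b (n + 1) := fun n => by
    have h1 := humono (Nat.lt_succ_self n)
    have h2 := hb n
    have h3 := hupos n
    nlinarith
  have hbposR : ∀ n, (0:ℝ) < (b (n + 1) : ℝ) := fun n => by
    have := hb2 n; positivity
  -- the series
  set f : ℕ → ℝ := fun k => (c (k + 1) : ℝ) / (u (k + 1) : ℝ) with hf
  have hfnn : ∀ k, 0 ≤ f k := fun k => by positivity
  have hfle : ∀ k, f k ≤ 1 / (u k : ℝ) - 1 / (u (k + 1) : ℝ) := by
    intro k
    have hcle : (c (k + 1) : ℝ) ≤ (b (k + 1) : ℝ) - 1 := by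
      have h := hclt k
      have : ((c (k + 1) : ℝ)) + 1 ≤ (b (k + 1) : ℝ) := by exact_mod_cast h
      linarith
    have hu1 := huposR k
    have hu2 := huposR (k + 1)
    have hbu : (u (k + 1) : ℝ) = (b (k + 1) : ℝ) * (u k : ℝ) := by
      exact_mod_cast hb k
    have h1 : 1 / (u k : ℝ) - 1 / (u (k+1) : ℝ) = ((b (k+1) : ℝ) - 1) / (u (k+1) : ℝ) := by
      rw [hbu, sub_div, div_mul_eq_div_div ((b (k+1) : ℝ)), div_self (hbposR k).ne']
    simp only [hf]
    rw [h1]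
    gcongr
  have hgsum : Summable fun k => 1 / (u k : ℝ) - 1 / (u (k + 1) : ℝ) := by
    apply summable_of_sum_range_le (c := 1)
    · intro k
      have := humono.monotone (Nat.le_succ k)
      have h1 := huposR k
      have h2 := huposR (k + 1)
      have : (u k : ℝ) ≤ (u (k+1) : ℝ) := by exact_mod_cast this
      rw [sub_nonneg]
      exact one_div_le_one_div_of_le h1 this
    · intro n
      rw [Finset.sum_range_sub' (fun k => 1 / (u k : ℝ))]
      have h2 := huposR n
      have : (0:ℝ) ≤ 1 / (u n : ℝ) := by positivity
      rw [hu0]; push_cast; linarith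
  have hfsum : Summable f := hgsum.of_nonneg_of_le hfnn hfle
  -- tail bound
  have htail : ∀ m, (∑' k, f (m + 1 + k)) ≤ 1 / (u (m + 1) : ℝ) := by
    intro m
    apply Real.tsum_le_of_sum_range_le (fun k => hfnn _)
    intro n
    calc ∑ k ∈ Finset.range n, f (m + 1 + k)
        ≤ ∑ k ∈ Finset.range n, (1 / (u (m + 1 + k) : ℝ) - 1 / (u (m + 1 + k + 1) : ℝ)) :=
          Finset.sum_le_sum fun k _ => hfle (m + 1 + k)
      _ = 1 / (u (m + 1) : ℝ) - 1 / (u (m + 1 + n) : ℝ) := by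
          exact Finset.sum_range_sub' (fun k => 1 / (u (m + 1 + k) : ℝ)) n
      _ ≤ 1 / (u (m + 1) : ℝ) := by
          have := huposR (m + 1 + n); have : (0:ℝ) ≤ 1 / (u (m+1+n):ℝ) := by positivity
          linarith
  -- key estimate
  have key : ∀ m : ℕ, |(u m : ℝ) * x - (round ((u m : ℝ) * x) : ℝ)| ≤
      |(c (m+1) : ℝ) / (b (m+1) : ℝ) - (round ((c (m+1) : ℝ) / (b (m+1) : ℝ)) : ℝ)|
        + 1 / (b (m+1) : ℝ) := by
    intro m
    -- decompose x
    have hsplit := Summable.sum_add_tsum_nat_add (f := f) m hfsum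
    have hx : x = (∑ i ∈ Finset.range m, f i) + ∑' k, f (k + m) := by
      rw [hsum]; exact (hsplit).symm
    have hsplit2 := Summable.sum_add_tsum_nat_add (f := fun k => f (k + m)) 1 ((summable_nat_add_iff m).mpr hfsum)
    have hT : (∑' k, f (k + m)) = f m + ∑' k, f (k + 1 + m) := by
      rw [← hsplit2]; simp
    -- the integer part
    have hdvd : ∀ i, i < m → u (i + 1) ∣ u m := by
      intro i hi
      have : ∀ t, u (i + 1) ∣ u (i + 1 + t) := by
        intro t
        induction t with
        | zero => simp
        | succ s ih =>
            have h : u (i + 1 + (s + 1)) = b (i + 1 + s + 1) * u (i + 1 + s) := hb (i + 1 + s)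
            rw [h]; exact ih.mul_left _
      obtain ⟨t, ht⟩ : ∃ t, m = i + 1 + t := ⟨m - (i+1), by omega⟩
      rw [ht]; exact this t
    set M : ℕ := ∑ i ∈ Finset.range m, (u m / u (i + 1)) * c (i + 1) with hM
    have hMS : (u m : ℝ) * (∑ i ∈ Finset.range m, f i) = (M : ℝ) := by
      rw [hM, Finset.mul_sum]
      push_cast
      apply Finset.sum_congr rfl
      intro i hi
      have hdi := hdvd i (Finset.mem_range.mp hi)
      have hdiv : ((u m / u (i + 1) : ℕ) : ℝ) * (u (i + 1) : ℝ) = (u m : ℝ) := by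
        exact_mod_cast Nat.div_mul_cancel hdi
      simp only [hf]
      rw [mul_div_assoc', div_eq_iff (huposR (i + 1)).ne', ← hdiv]
      ring
    -- first tail term
    have hfm : (u m : ℝ) * f m = (c (m+1) : ℝ) / (b (m+1) : ℝ) := by
      simp only [hf]
      have hbu : (u (m + 1) : ℝ) = (b (m + 1) : ℝ) * (u m : ℝ) := by
        exact_mod_cast hb m
      have h1 := huposR m
      have h2 := hbposR m
      rw [hbu, mul_div_assoc', div_eq_div_iff (mul_pos (hbposR m) (huposR m)).ne' (hbposR m).ne']
      ring
    -- remainder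
    set R : ℝ := (u m : ℝ) * ∑' k, f (k + 1 + m) with hR
    have hRnn : 0 ≤ R := by
      rw [hR]
      have : 0 ≤ ∑' k, f (k + 1 + m) := tsum_nonneg fun k => hfnn _
      have := huposR m
      positivity
    have hRle : R ≤ 1 / (b (m+1) : ℝ) := by
      rw [hR]
      have heq : (∑' k, f (k + 1 + m)) = ∑' k, f (m + 1 + k) :=
        tsum_congr fun k => by rw [show k + 1 + m = m + 1 + k by omega]
      rw [heq]
      have h1 := htail m
      have hum := huposR m
      have hbu : (u (m + 1) : ℝ) = (b (m + 1) : ℝ) * (u m : ℝ) := by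
        exact_mod_cast hb m
      calc (u m : ℝ) * ∑' k, f (m + 1 + k) ≤ (u m : ℝ) * (1 / (u (m + 1) : ℝ)) :=
            mul_le_mul_of_nonneg_left h1 (le_of_lt hum)
        _ = 1 / (b (m+1) : ℝ) := by
            rw [hbu, mul_one_div, div_eq_div_iff (mul_pos (hbposR m) (huposR m)).ne' (hbposR m).ne']
            ring
    -- put together
    set t : ℝ := (c (m+1) : ℝ) / (b (m+1) : ℝ) with ht
    have hdecomp : (u m : ℝ) * x = (M : ℝ) + (t + R) := by
      rw [hx, mul_add, hMS, hT, mul_add, hfm, hR, ht]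
    rw [hdecomp]
    have hround := round_le ((M : ℝ) + (t + R)) ((M : ℤ) + round t)
    have hcast : (((M : ℤ) + round t : ℤ) : ℝ) = (M : ℝ) + (round t : ℝ) := by push_cast; ring
    rw [hcast] at hround
    calc |(M : ℝ) + (t + R) - (round ((M : ℝ) + (t + R)) : ℝ)|
        ≤ |(M : ℝ) + (t + R) - ((M : ℝ) + (round t : ℝ))| := hround
      _ = |t - (round t : ℝ) + R| := by congr 1; ring
      _ ≤ |t - (round t : ℝ)| + |R| := abs_add_le _ _
      _ ≤ |t - (round t : ℝ)| + 1 / (b (m+1) : ℝ) := by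
          rw [abs_of_nonneg hRnn]; linarith
  -- final limit
  have hL : atTop ⊓ 𝓟 B ≤ atTop ⊓ 𝓟 A := inf_le_inf_left _ (principal_mono.mpr hBA)
  have hbB : Tendsto b (atTop ⊓ 𝓟 B) atTop := hAdiv.mono_left hL
  have hbinv : Tendsto (fun n => 1 / (b n : ℝ)) (atTop ⊓ 𝓟 B) (nhds 0) := by
    simp only [one_div]
    exact (tendsto_natCast_atTop_atTop.comp hbB).inv_tendsto_atTop
  have hsum0 : Tendsto (fun n : ℕ => |(c n : ℝ) / (b n : ℝ) -
      (round ((c n : ℝ) / (b n : ℝ)) : ℝ)| + 1 / (b n : ℝ)) (atTop ⊓ 𝓟 B) (nhds 0) := by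
    have := hBtend.add hbinv
    simpa using this
  refine squeeze_zero' (Eventually.of_forall fun n => abs_nonneg _) ?_ hsum0
  have h1 : ∀ᶠ n in atTop ⊓ 𝓟 B, 1 ≤ n := (eventually_ge_atTop 1).filter_mono inf_le_left
  filter_upwards [h1] with n hn
  have h2 := key (n - 1)
  rw [show n - 1 + 1 = n by omega] at h2
  exact h2
end

section
/- Let u be an arithmetic sequence with ratios b_n and x ∈ [0,1) with support S and S_b = {n : c_n = b_n − 1}. Let E ⊆ ℕ be infinite and k ∈ ℕ with S_k(E) := ⋃_{j=0}^k (E + j) ⊆ S_b. If there exists an infinite F ⊆ E + k with lim_{m∈F} (c_{m+1}+1)/b_{m+1} = 1 and F + 1 not b-bounded, then there exists an infinite B ⊆ E with ‖u_{n−1}x‖ → 0 along n ∈ B. -/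
/-!
For `N = n - 1`, `u_N x` is an integer plus `u_N` times the tail `∑_{m > N} c_m / u_m`, and the
tail lies in `[0, 1/u_N]` because `∑_{m > N} (b_m - 1) / u_m = 1/u_N` telescopes. When the digits
`n, …, n + k` are maximal, the tail falls short of `1/u_N` by at most `(b_M - c_M) / u_M`, where
`M = n + k + 1`, so `‖u_{n-1} x‖ ≤ 1 - c_M / b_M`. Along a subset of `F` on which `b_{m+1} → ∞`
this bound tends to `0`, because `(c_{m+1} + 1) / b_{m+1} → 1`.
-/

open Filter Topology

lemma natCast_le_sub_one_of_lt {m n : ℕ} (h : m < n) : (m : ℝ) ≤ n - 1 := by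
  have : (m : ℝ) + 1 ≤ n := by exact_mod_cast h
  linarith

noncomputable def digitTail (u c : ℕ → ℕ) (N : ℕ) : ℝ :=
  ∑' j, (c (N + j + 1) : ℝ) / u (N + j + 1)

section DigitExpansion

variable {u b c : ℕ → ℕ}

lemma seq_pos (hb : ∀ n, u (n + 1) = b (n + 1) * u n) (hu : StrictMono u) (n : ℕ) :
    0 < u n := by
  have h0 : 0 < u 0 := by
    have h01 := hu Nat.zero_lt_one
    rw [hb 0] at h01
    exact Nat.pos_of_ne_zero fun h => by simp [h] at h01
  exact h0.trans_le (hu.monotone n.zero_le)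

lemma dvd_of_le_of_succ_eq_mul (hb : ∀ n, u (n + 1) = b (n + 1) * u n) {m n : ℕ} (h : m ≤ n) :
    u m ∣ u n := by
  induction n, h using Nat.le_induction with
  | base => rfl
  | succ n _ ih => rw [hb n]; exact ih.mul_left _

variable (hb : ∀ n, u (n + 1) = b (n + 1) * u n) (hu : StrictMono u)
include hb hu

lemma ratio_pos (n : ℕ) : 0 < b (n + 1) := by
  have h := seq_pos hb hu (n + 1)
  rw [hb n] at h
  exact Nat.pos_of_mul_pos_right h

lemma sub_one_div_eq_inv_sub_inv (n : ℕ) :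
    ((b (n + 1) : ℝ) - 1) / u (n + 1) = 1 / u n - 1 / u (n + 1) := by
  have hn : (u n : ℝ) ≠ 0 := by exact_mod_cast (seq_pos hb hu n).ne'
  rw [hb n]
  push_cast
  have : (b (n + 1) : ℝ) ≠ 0 := by exact_mod_cast (ratio_pos hb hu n).ne'
  field_simp

lemma sum_range_sub_one_div (N L : ℕ) :
    ∑ j ∈ Finset.range L, ((b (N + j + 1) : ℝ) - 1) / u (N + j + 1) =
      1 / u N - 1 / u (N + L) := by
  simp only [sub_one_div_eq_inv_sub_inv hb hu]
  exact Finset.sum_range_sub' (fun j => 1 / (u (N + j) : ℝ)) L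

lemma hasSum_sub_one_div (N : ℕ) :
    HasSum (fun j => ((b (N + j + 1) : ℝ) - 1) / u (N + j + 1)) (1 / u N) := by
  have hnonneg (j : ℕ) : 0 ≤ ((b (N + j + 1) : ℝ) - 1) / u (N + j + 1) := by
    have : (1 : ℝ) ≤ b (N + j + 1) := Nat.one_le_cast.mpr (ratio_pos hb hu (N + j))
    exact div_nonneg (by linarith) (Nat.cast_nonneg _)
  rw [hasSum_iff_tendsto_nat_of_nonneg hnonneg]
  simp only [sum_range_sub_one_div hb hu]
  have hinv : Tendsto (fun L => 1 / (u (N + L) : ℝ)) atTop (𝓝 0) := by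
    simp only [one_div]
    exact tendsto_inv_atTop_zero.comp <| tendsto_natCast_atTop_atTop.comp <|
      hu.tendsto_atTop.comp (tendsto_atTop_mono (fun L => Nat.le_add_left L N) tendsto_id)
  simpa using (tendsto_const_nhds (x := 1 / (u N : ℝ))).sub hinv

variable (hc : ∀ n, c (n + 1) < b (n + 1))
include hc

lemma summable_digits (N : ℕ) : Summable fun j => (c (N + j + 1) : ℝ) / u (N + j + 1) :=
  (hasSum_sub_one_div hb hu N).summable.of_nonneg_of_le (fun _ => by positivity) fun j =>
    div_le_div_of_nonneg_right (natCast_le_sub_one_of_lt (hc (N + j))) (Nat.cast_nonneg _)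

lemma digitTail_le (N : ℕ) : digitTail u c N ≤ 1 / u N :=
  hasSum_le (fun j => div_le_div_of_nonneg_right (natCast_le_sub_one_of_lt (hc (N + j)))
    (Nat.cast_nonneg _)) (summable_digits hb hu hc N).hasSum (hasSum_sub_one_div hb hu N)

lemma le_digitTail {N L : ℕ} (hfull : ∀ j < L, c (N + j + 1) + 1 = b (N + j + 1)) :
    1 / u N - ((b (N + L + 1) : ℝ) - c (N + L + 1)) / u (N + L + 1) ≤ digitTail u c N := by
  have hpartial : ∑ j ∈ Finset.range (L + 1), (c (N + j + 1) : ℝ) / u (N + j + 1)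
      = 1 / u N - ((b (N + L + 1) : ℝ) - c (N + L + 1)) / u (N + L + 1) := by
    have hmax : ∀ j ∈ Finset.range L, (c (N + j + 1) : ℝ) = b (N + j + 1) - 1 := by
      intro j hj
      rw [eq_sub_iff_add_eq]
      exact_mod_cast hfull j (Finset.mem_range.mp hj)
    rw [Finset.sum_range_succ, Finset.sum_congr rfl fun j hj => by rw [hmax j hj],
      sum_range_sub_one_div hb hu, hb (N + L)]
    have : (u (N + L) : ℝ) ≠ 0 := by exact_mod_cast (seq_pos hb hu _).ne'
    have : (b (N + L + 1) : ℝ) ≠ 0 := by exact_mod_cast (ratio_pos hb hu _).ne'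
    push_cast
    field_simp
    ring
  rw [← hpartial]
  exact (summable_digits hb hu hc N).sum_le_tsum _ fun _ _ => by positivity

lemma exists_int_mul_tsum_eq (N : ℕ) : ∃ A : ℤ,
    (u N : ℝ) * ∑' n, (c (n + 1) : ℝ) / u (n + 1) = A + u N * digitTail u c N := by
  refine ⟨(∑ i ∈ Finset.range N, c (i + 1) * (u N / u (i + 1)) : ℕ), ?_⟩
  have hsplit := (summable_digits hb hu hc 0).sum_add_tsum_nat_add N
  simp only [zero_add] at hsplit
  rw [← hsplit, mul_add, digitTail, Finset.mul_sum, Int.cast_natCast, Nat.cast_sum]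
  congr 1
  · refine Finset.sum_congr rfl fun i hi => ?_
    rw [Nat.cast_mul, Nat.cast_div (dvd_of_le_of_succ_eq_mul hb (Finset.mem_range.mp hi))
      (by exact_mod_cast (seq_pos hb hu _).ne')]
    ring
  · simp only [add_comm _ N]

lemma abs_mul_sub_round_le {x : ℝ} (hx : x = ∑' n, (c (n + 1) : ℝ) / u (n + 1)) {N L : ℕ}
    (hfull : ∀ j < L, c (N + j + 1) + 1 = b (N + j + 1)) :
    |(u N : ℝ) * x - round ((u N : ℝ) * x)| ≤ 1 - (c (N + L + 1) : ℝ) / b (N + L + 1) := by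
  obtain ⟨A, hA⟩ := exists_int_mul_tsum_eq hb hu hc N
  set M := N + L + 1
  have huN : (0 : ℝ) < u N := by exact_mod_cast seq_pos hb hu N
  have hbM : (0 : ℝ) < b M := by exact_mod_cast ratio_pos hb hu (N + L)
  have hcM : (c M : ℝ) ≤ b M := by exact_mod_cast (hc (N + L)).le
  have hupper : (u N : ℝ) * digitTail u c N ≤ 1 := by
    have := mul_le_mul_of_nonneg_left (digitTail_le hb hu hc N) huN.le
    rwa [mul_one_div_cancel huN.ne'] at this
  have hlower : 1 - ((b M : ℝ) - c M) * (u N / u M) ≤ u N * digitTail u c N := by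
    have := mul_le_mul_of_nonneg_left (le_digitTail hb hu hc hfull) huN.le
    rwa [mul_sub, mul_one_div_cancel huN.ne', mul_div_left_comm] at this
  have hratio : (u N : ℝ) / u M ≤ 1 / b M := by
    have hle : (u N : ℝ) ≤ u (N + L) := by exact_mod_cast hu.monotone (Nat.le_add_right N L)
    have huNL : (0 : ℝ) < u (N + L) := by exact_mod_cast seq_pos hb hu (N + L)
    rw [show M = N + L + 1 from rfl, hb (N + L), Nat.cast_mul, div_le_div_iff₀ (by positivity) hbM]
    nlinarith
  calc |(u N : ℝ) * x - round ((u N : ℝ) * x)|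
      ≤ |(u N : ℝ) * x - ((A + 1 : ℤ) : ℝ)| := round_le _ _
    _ = 1 - u N * digitTail u c N := by
        rw [hx, hA, Int.cast_add, Int.cast_one, abs_sub_comm,
          show (A : ℝ) + 1 - (A + u N * digitTail u c N) = 1 - u N * digitTail u c N by ring]
        exact abs_of_nonneg (by linarith)
    _ ≤ ((b M : ℝ) - c M) * (u N / u M) := by linarith
    _ ≤ ((b M : ℝ) - c M) * (1 / b M) := by gcongr
    _ = 1 - (c M : ℝ) / b M := by field_simp

end DigitExpansion

lemma exists_infinite_subset_tendsto_atTop {F : Set ℕ} {f : ℕ → ℕ}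
    (hf : ¬ ∃ M, ∀ m ∈ F, f m ≤ M) :
    ∃ F' ⊆ F, F'.Infinite ∧ Tendsto f (atTop ⊓ 𝓟 F') atTop := by
  have hfreq (n : ℕ) : ∃ᶠ m in atTop, m ∈ F ∧ n < f m := by
    refine Nat.frequently_atTop_iff_infinite.mpr fun hfin => hf ?_
    obtain ⟨M, hM⟩ := (hfin.image f).bddAbove
    refine ⟨max n M, fun m hm => ?_⟩
    by_cases hnm : n < f m
    · exact le_max_of_le_right (hM ⟨m, ⟨hm, hnm⟩, rfl⟩)
    · exact le_max_of_le_left (not_lt.mp hnm)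
  obtain ⟨φ, hφ, hφF⟩ := extraction_forall_of_frequently hfreq
  refine ⟨Set.range φ, Set.range_subset_iff.mpr fun i => (hφF i).1,
    Set.infinite_range_of_injective hφ.injective, tendsto_atTop.mpr fun C => ?_⟩
  rw [eventually_inf_principal]
  filter_upwards [eventually_ge_atTop (φ C)]
  rintro _ hm ⟨i, rfl⟩
  exact ((hφ.le_iff_le.mp hm).trans_lt (hφF i).2).le

lemma exists_subset_infinite_tendsto_add_principal {E F : Set ℕ} {k : ℕ}
    (hF : F ⊆ (· + k) '' E) (hFinf : F.Infinite) :
    ∃ B ⊆ E, B.Infinite ∧ Tendsto (· + k) (atTop ⊓ 𝓟 B) (atTop ⊓ 𝓟 F) := by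
  refine ⟨{n ∈ E | n + k ∈ F}, Set.sep_subset _ _, ?_, ?_⟩
  · refine Set.Infinite.of_image (· + k) (hFinf.mono fun m hm => ?_)
    obtain ⟨n, hn, rfl⟩ := hF hm
    exact ⟨n, ⟨hn, hm⟩, rfl⟩
  · exact tendsto_inf.mpr ⟨(tendsto_add_atTop_nat k).mono_left inf_le_left,
      tendsto_principal.mpr (eventually_inf_principal.mpr (.of_forall fun _ hn => hn.2))⟩

theorem stmt_12_general (u b c : ℕ → ℕ) (x : ℝ)
    (humono : StrictMono u)
    (hb : ∀ n, u (n + 1) = b (n + 1) * u n)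
    (hsum : x = ∑' n : ℕ, (c (n + 1) : ℝ) / (u (n + 1) : ℝ))
    (hclt : ∀ n, c (n + 1) < b (n + 1))
    (k : ℕ) (E F : Set ℕ)
    (hSk : ∀ n ∈ E, ∀ j ≤ k, 1 ≤ n + j ∧ c (n + j) + 1 = b (n + j))
    (hF : F ⊆ (fun n => n + k) '' E)
    (hlim : Tendsto (fun m : ℕ => ((c (m + 1) : ℝ) + 1) / (b (m + 1) : ℝ))
      (atTop ⊓ 𝓟 F) (nhds 1))
    (hnb : ¬ ∃ M : ℕ, ∀ m ∈ F, b (m + 1) ≤ M) :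
    ∃ B ⊆ E, B.Infinite ∧
      Tendsto (fun n : ℕ => |(u (n - 1) : ℝ) * x - (round ((u (n - 1) : ℝ) * x) : ℝ)|)
        (atTop ⊓ 𝓟 B) (nhds 0) := by
  obtain ⟨F', hF'F, hF'inf, hbF'⟩ :=
    exists_infinite_subset_tendsto_atTop (f := fun m => b (m + 1)) hnb
  have hbound (n : ℕ) (hn : n ∈ E) : |(u (n - 1) : ℝ) * x - round ((u (n - 1) : ℝ) * x)|
      ≤ 1 - (c (n + k + 1) : ℝ) / b (n + k + 1) := by
    have hn1 := (hSk n hn 0 k.zero_le).1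
    have := abs_mul_sub_round_le hb humono hclt hsum (N := n - 1) (L := k + 1) fun j hj => by
      rw [show n - 1 + j + 1 = n + j by omega]
      exact (hSk n hn j (by omega)).2
    rwa [show n - 1 + (k + 1) + 1 = n + k + 1 by omega] at this
  have hψ : Tendsto (fun m => 1 - (c (m + 1) : ℝ) / b (m + 1)) (atTop ⊓ 𝓟 F') (𝓝 0) := by
    have hinv : Tendsto (fun m => 1 / (b (m + 1) : ℝ)) (atTop ⊓ 𝓟 F') (𝓝 0) := by
      simpa [Function.comp_def, Pi.inv_def] using
        (tendsto_natCast_atTop_atTop.comp hbF').inv_tendsto_atTop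
    have hlim' := hlim.mono_left (inf_le_inf_left _ (principal_mono.mpr hF'F))
    simpa [add_div] using tendsto_const_nhds (x := (1 : ℝ)).sub (hlim'.sub hinv)
  obtain ⟨B, hBE, hBinf, hBF'⟩ :=
    exists_subset_infinite_tendsto_add_principal (hF'F.trans hF) hF'inf
  exact ⟨B, hBE, hBinf, squeeze_zero' (.of_forall fun _ => abs_nonneg _)
    (eventually_inf_principal.mpr (.of_forall fun n hn => hbound n (hBE hn))) (hψ.comp hBF')⟩

/-- Claim DD (contrapositive form): if `E` is infinite, `S_k(E) = ⋃_{j≤k} (E+j) ⊆ S_b`, and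
there is an infinite `F ⊆ E + k` with `(c_{m+1}+1)/b_{m+1} → 1` along `F` and `F + 1` not
`b`-bounded, then `‖u_{n-1} x‖ → 0` along some infinite `B ⊆ E`. -/
theorem stmt_12 (u b c : ℕ → ℕ) (x : ℝ)
    (hu0 : u 0 = 1) (humono : StrictMono u)
    (hb : ∀ n, u (n + 1) = b (n + 1) * u n)
    (hx0 : 0 ≤ x) (hx1 : x < 1)
    (hc0 : c 0 = 0)
    (hsum : x = ∑' n : ℕ, (c (n + 1) : ℝ) / (u (n + 1) : ℝ))
    (hclt : ∀ n, c (n + 1) < b (n + 1))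
    (hcinf : {n : ℕ | c (n + 1) + 1 < b (n + 1)}.Infinite)
    (k : ℕ) (E F : Set ℕ)
    (hE : E.Infinite)
    (hSk : ∀ n ∈ E, ∀ j ≤ k, 1 ≤ n + j ∧ c (n + j) + 1 = b (n + j))
    (hF : F ⊆ (fun n => n + k) '' E) (hFinf : F.Infinite)
    (hlim : Tendsto (fun m : ℕ => ((c (m + 1) : ℝ) + 1) / (b (m + 1) : ℝ))
      (atTop ⊓ 𝓟 F) (nhds 1))
    (hnb : ¬ ∃ M : ℕ, ∀ m ∈ F, b (m + 1) ≤ M) :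
    ∃ B ⊆ E, B.Infinite ∧
      Tendsto (fun n : ℕ => |(u (n - 1) : ℝ) * x - (round ((u (n - 1) : ℝ) * x) : ℝ)|)
        (atTop ⊓ 𝓟 B) (nhds 0) :=
  stmt_12_general u b c x humono hb hsum hclt k E F hSk hF hlim hnb
end

section
/- Let u be a b-bounded arithmetic sequence (sup_n b_n < ∞), I a translation invariant free ideal of ℕ, and x ∈ [0,1) with support S ∉ I such that the convexity number c(S) < ∞ (all maximal blocks of consecutive elements of S have bounded length). Then x (mod 1) is not a topologically u_I-torsion element: the sequence u_n x does not I-converge to 0 in ℝ/ℤ. -/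
noncomputable def ff (u c : ℕ → ℕ) (k : ℕ) : ℝ := (c (k + 1) : ℝ) / (u (k + 1) : ℝ)

noncomputable def tt (u c : ℕ → ℕ) (n : ℕ) : ℝ := ∑' k, (u n : ℝ) * ff u c (n + k)

/-- Theorem Scg(a): if `u` is `b`-bounded, `I` is a translation invariant free ideal, the
support `S` of `x` is not in `I` and the convexity number `c(S)` is finite (blocks of
consecutive elements of `S` have bounded length), then `u_n x` does not `I`-converge to `0`
mod `1`. -/
theorem stmt_14 (u b c : ℕ → ℕ) (x : ℝ)
    (hu0 : u 0 = 1) (humono : StrictMono u)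
    (hb : ∀ n, u (n + 1) = b (n + 1) * u n)
    (hx0 : 0 ≤ x) (hx1 : x < 1)
    (hc0 : c 0 = 0)
    (hsum : x = ∑' n : ℕ, (c (n + 1) : ℝ) / (u (n + 1) : ℝ))
    (hclt : ∀ n, c (n + 1) < b (n + 1))
    (hcinf : {n : ℕ | c (n + 1) + 1 < b (n + 1)}.Infinite)
    (hbbdd : ∃ M : ℕ, ∀ n : ℕ, 1 ≤ n → b n ≤ M)
    (I : Set (Set ℕ))
    (hne : I.Nonempty)
    (hunion : ∀ A B : Set ℕ, A ∈ I → B ∈ I → A ∪ B ∈ I)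
    (hsubset : ∀ A B : Set ℕ, A ⊆ B → B ∈ I → A ∈ I)
    (hfree : ∀ A : Set ℕ, A.Finite → A ∈ I)
    (htrans : ∀ A ∈ I, ∀ z : ℤ, {m : ℕ | ∃ a ∈ A, (a : ℤ) + z = (m : ℤ)} ∈ I)
    (hS : {n : ℕ | c n ≠ 0} ∉ I)
    (hconvexity : ∃ ℓ : ℕ, ∀ n : ℕ, ∃ i ≤ ℓ, c (n + i) = 0) :
    ¬ ∀ ε : ℝ, 0 < ε →
      {n : ℕ | ε ≤ |(u n : ℝ) * x - (round ((u n : ℝ) * x) : ℝ)|} ∈ I := by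
  intro H
  obtain ⟨M, hM⟩ := hbbdd
  obtain ⟨ℓ, hℓ⟩ := hconvexity
  -- basic positivity facts
  have hu_posN : ∀ n, 0 < u n := fun n => lt_of_lt_of_le (by omega : 0 < 1)
    (hu0 ▸ humono.monotone (Nat.zero_le n))
  have hu_pos : ∀ n, (0:ℝ) < u n := fun n => by exact_mod_cast hu_posN n
  have hb2 : ∀ n, 2 ≤ b (n + 1) := by
    intro n
    have h1 : u n < u (n + 1) := humono (Nat.lt_succ_self n)
    rw [hb n] at h1
    rcases Nat.lt_or_ge (b (n+1)) 2 with h | h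
    · interval_cases h' : b (n + 1) <;> omega
    · exact h
  have hM2 : 2 ≤ M := le_trans (hb2 0) (hM 1 le_rfl)
  have hMpos : (0:ℝ) < M := by exact_mod_cast (by omega : 0 < M)
  have hM1 : (1:ℝ) ≤ M := by exact_mod_cast (by omega : 1 ≤ M)
  have hu_ge : ∀ k, 2 ^ k ≤ u k := by
    intro k
    induction k with
    | zero => simp [hu0]
    | succ k ih =>
      rw [hb k, pow_succ, mul_comm ((2:ℕ)^k) 2]
      exact Nat.mul_le_mul (hb2 k) ih
  -- summability of the base series
  have hff_nonneg : ∀ k, 0 ≤ ff u c k := fun k => by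
    unfold ff; positivity
  have hf_sum : Summable (ff u c) := by
    refine Summable.of_nonneg_of_le hff_nonneg (fun k => ?_)
      ((summable_geometric_of_lt_one (r := (1/2:ℝ)) (by norm_num) (by norm_num)).mul_left (M:ℝ))
    have h1 : (c (k+1):ℝ) ≤ M :=
      by exact_mod_cast le_trans (hclt k).le (hM (k+1) (by omega))
    have h2 : (2:ℝ)^k ≤ u (k+1) := by
      calc (2:ℝ)^k ≤ (2:ℝ)^(k+1) := by
            apply pow_le_pow_right₀ (by norm_num) (by omega)
        _ ≤ u (k+1) := by exact_mod_cast hu_ge (k+1)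
      
    calc ff u c k ≤ (M:ℝ) / 2^k :=
          div_le_div₀ (by positivity) h1 (by positivity) h2
      _ = (M:ℝ) * (1/2)^k := by rw [one_div_pow, mul_one_div]
  have hg_sum : ∀ n, Summable (fun k => (u n : ℝ) * ff u c (n + k)) := by
    intro n
    have h1 : Summable (fun k => ff u c (k + n)) := (summable_nat_add_iff n).2 hf_sum
    have h2 : Summable (fun k => ff u c (n + k)) := by
      refine h1.congr fun k => ?_
      rw [add_comm]
    exact h2.mul_left _
  have ht_nonneg : ∀ n, 0 ≤ tt u c n := fun n =>
    tsum_nonneg fun k => mul_nonneg (hu_pos n).le (hff_nonneg _)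
  -- divisibility: u m ∣ u n for m ≤ n
  have hdvd : ∀ {m n : ℕ}, m ≤ n → u m ∣ u n := by
    intro m n h
    obtain ⟨k, rfl⟩ := Nat.exists_eq_add_of_le h
    clear h
    induction k with
    | zero => exact dvd_rfl
    | succ k ih =>
      have : u (m + k + 1) = b (m + k + 1) * u (m + k) := hb (m + k)
      rw [show m + (k+1) = m + k + 1 by omega, this]
      exact ih.mul_left _
  -- u_n x = integer + t_n
  have hint : ∀ n, ∃ N : ℤ, (u n : ℝ) * x = N + tt u c n := by
    intro n
    refine ⟨((∑ k ∈ Finset.range n, c (k+1) * (u n / u (k+1)) : ℕ) : ℤ), ?_⟩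
    have h2 : (u n : ℝ) * x = ∑' k, (u n:ℝ) * ff u c k := by
      rw [hsum]
      exact (tsum_mul_left).symm
    rw [h2, ← Summable.sum_add_tsum_nat_add n (hf_sum.mul_left ((u n : ℝ)))]
    congr 1
    · push_cast
      refine Finset.sum_congr rfl fun k hk => ?_
      have hk' : k + 1 ≤ n := Finset.mem_range.1 hk
      have hd : u (k+1) ∣ u n := hdvd hk'
      rw [Int.cast_div (Int.natCast_dvd_natCast.2 hd)
        (by exact_mod_cast ne_of_gt (hu_pos (k+1)))]
      push_cast
      unfold ff
      ring
    · exact tsum_congr fun k => by rw [add_comm k n]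
  -- the recurrence b_{n+1} t_n = c_{n+1} + t_{n+1}
  have hrec : ∀ n, (b (n+1) : ℝ) * tt u c n = (c (n+1) : ℝ) + tt u c (n+1) := by
    intro n
    have hs0 : Summable (fun k => (u (n+1):ℝ) * ff u c (n + k)) := by
      have h1 : Summable (fun k => ff u c (n + k)) :=
        ((summable_nat_add_iff n).2 hf_sum).congr fun k => by rw [add_comm]
      exact h1.mul_left _
    have h1 : (b (n+1):ℝ) * tt u c n = ∑' k, (u (n+1):ℝ) * ff u c (n + k) := by
      unfold tt
      rw [← tsum_mul_left]
      refine tsum_congr fun k => ?_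
      have hbu : ((u (n+1):ℕ):ℝ) = (b (n+1):ℝ) * (u n:ℝ) := by exact_mod_cast hb n
      rw [hbu]; ring
    rw [h1, Summable.tsum_eq_zero_add hs0]
    congr 1
    · show (u (n+1):ℝ) * ff u c (n + 0) = (c (n+1) : ℝ)
      unfold ff
      rw [Nat.add_zero, mul_comm, div_mul_cancel₀ _ (ne_of_gt (hu_pos _))]
    · unfold tt
      refine tsum_congr fun k => ?_
      have : n + (k + 1) = n + 1 + k := by omega
      rw [this]
  -- t_n ≤ 1
  have ht_le_one : ∀ n, tt u c n ≤ 1 := by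
    intro n
    refine Summable.tsum_le_of_sum_le (hg_sum n) fun s => ?_
    obtain ⟨N, hN⟩ := s.exists_nat_subset_range
    calc ∑ k ∈ s, (u n : ℝ) * ff u c (n + k)
        ≤ ∑ k ∈ Finset.range N, (u n : ℝ) * ff u c (n + k) :=
          Finset.sum_le_sum_of_subset_of_nonneg hN
            (fun k _ _ => mul_nonneg (hu_pos n).le (hff_nonneg _))
      _ ≤ ∑ k ∈ Finset.range N, ((u n:ℝ)/(u (n+k):ℝ) - (u n:ℝ)/(u (n+k+1):ℝ)) := by
          refine Finset.sum_le_sum fun k _ => ?_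
          have hbu : ((u (n+k+1):ℕ):ℝ) = (b (n+k+1):ℝ) * (u (n+k):ℝ) := by
            exact_mod_cast hb (n+k)
          have hcb : (c (n+k+1):ℝ) ≤ (b (n+k+1):ℝ) - 1 := by
            have := hclt (n+k)
            have : (c (n+k+1):ℝ) + 1 ≤ (b (n+k+1):ℝ) := by exact_mod_cast this
            linarith
          have hkey : (u n:ℝ)/(u (n+k):ℝ) - (u n:ℝ)/(u (n+k+1):ℝ)
              = (u n:ℝ) * (((b (n+k+1):ℝ) - 1)/(u (n+k+1):ℝ)) := by
            rw [hbu]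
            have h1 : (u (n+k):ℝ) ≠ 0 := ne_of_gt (hu_pos _)
            have h2 : (b (n+k+1):ℝ) ≠ 0 := by
              have := hb2 (n+k)
              exact_mod_cast (by omega : b (n+k+1) ≠ 0)
            field_simp
          rw [hkey]
          unfold ff
          have := hu_pos (n+k+1)
          gcongr
      _ = (u n:ℝ)/(u (n+0):ℝ) - (u n:ℝ)/(u (n+N):ℝ) := by
          exact Finset.sum_range_sub' (fun k => (u n:ℝ)/(u (n+k):ℝ)) N
      _ ≤ 1 := by
          rw [Nat.add_zero, div_self (ne_of_gt (hu_pos n))]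
          have : 0 ≤ (u n:ℝ)/(u (n+N):ℝ) := by positivity
          linarith
  -- lower bound on support
  have ht_lb : ∀ n, c (n+1) ≠ 0 → 1 / (M:ℝ) ≤ tt u c n := by
    intro n hc
    have h1 : (1:ℝ) ≤ (c (n+1):ℝ) := by exact_mod_cast Nat.one_le_iff_ne_zero.2 hc
    have h2 := hrec n
    have h3 := ht_nonneg (n+1)
    have hbM : (b (n+1):ℝ) ≤ M := by exact_mod_cast hM (n+1) (by omega)
    have h4 : (1:ℝ) ≤ (M:ℝ) * tt u c n := by
      have h5 : (1:ℝ) ≤ (b (n+1):ℝ) * tt u c n := by rw [h2]; linarith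
      nlinarith [ht_nonneg n]
    rw [div_le_iff₀ hMpos]
    linarith [h4]
  -- drop estimate
  have hdrop : ∀ n, 1 - tt u c (n+1) ≤ (M:ℝ) * (1 - tt u c n) := by
    intro n
    have h2 := hrec n
    have hcb : (c (n+1):ℝ) + 1 ≤ (b (n+1):ℝ) := by exact_mod_cast hclt n
    have hbM : (b (n+1):ℝ) ≤ M := by exact_mod_cast hM (n+1) (by omega)
    have h3 := ht_le_one n
    nlinarith
  -- chain estimate
  have hchain : ∀ i n, c (n + 1 + i) = 0 → 1 ≤ 2 * (M:ℝ)^i * (1 - tt u c n) := by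
    intro i
    induction i with
    | zero =>
      intro n h
      have h2 := hrec n
      rw [Nat.add_zero] at h
      rw [h] at h2
      have hb2' : (2:ℝ) ≤ (b (n+1):ℝ) := by exact_mod_cast hb2 n
      have h3 := ht_le_one (n+1)
      have h4 := ht_nonneg n
      simp only [pow_zero, mul_one]
      push_cast at h2
      nlinarith
    | succ i ih =>
      intro n h
      have h' : (n + 1) + 1 + i = n + 1 + (i + 1) := by omega
      have := ih (n + 1) (by rw [h']; exact h)
      have hd := hdrop n
      have hp : (0:ℝ) ≤ 2 * (M:ℝ)^i := by positivity
      have := mul_le_mul_of_nonneg_left hd hp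
      rw [pow_succ]
      nlinarith
  -- the ε
  set ε : ℝ := min (1 / (M:ℝ)) (1 / (2 * (M:ℝ)^ℓ)) with hεdef
  have hεpos : 0 < ε := by
    apply lt_min <;> positivity
  have hB := H ε hεpos
  set B := {n : ℕ | ε ≤ |(u n : ℝ) * x - (round ((u n : ℝ) * x) : ℝ)|} with hBdef
  -- every support point (shifted) is in B
  have hmem : ∀ n, c (n+1) ≠ 0 → n ∈ B := by
    intro n hc
    have htl : ε ≤ tt u c n := le_trans (min_le_left _ _) (ht_lb n hc)
    obtain ⟨i, hiℓ, hi0⟩ := hℓ (n+1)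
    have hch := hchain i n hi0
    have hMiℓ : (M:ℝ)^i ≤ (M:ℝ)^ℓ := pow_le_pow_right₀ hM1 hiℓ
    have htu : ε ≤ 1 - tt u c n := by
      have h1 : (1:ℝ) ≤ 2 * (M:ℝ)^ℓ * (1 - tt u c n) := by
        have h0 : 0 ≤ 1 - tt u c n := by
          nlinarith [pow_pos hMpos i]
        nlinarith
      have h2 : 1 / (2 * (M:ℝ)^ℓ) ≤ 1 - tt u c n := by
        rw [div_le_iff₀ (by positivity)]
        linarith
      exact le_trans (min_le_right _ _) h2
    obtain ⟨N, hN⟩ := hint n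
    show ε ≤ |(u n : ℝ) * x - (round ((u n : ℝ) * x) : ℝ)|
    rw [hN]
    set r : ℤ := round ((N:ℝ) + tt u c n) with hr
    rcases le_or_gt r N with h | h
    · have : (r:ℝ) ≤ (N:ℝ) := by exact_mod_cast h
      rw [abs_of_nonneg (by linarith [hεpos])]
      linarith
    · have : (N:ℝ) + 1 ≤ (r:ℝ) := by exact_mod_cast h
      rw [abs_of_nonpos (by linarith)]
      linarith
  -- transfer through the ideal
  have hT := htrans B hB 1
  have hU := hunion _ _ hT (hfree {0} (Set.finite_singleton 0))
  refine hS (hsubset _ _ ?_ hU)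
  intro m hm
  match m with
  | 0 => exact Or.inr rfl
  | n + 1 =>
    left
    exact ⟨n, hmem n hm, by push_cast; ring⟩
end

section
/- Let u be a b-bounded arithmetic sequence, I a translation invariant free ideal of ℕ, and x ∈ [0,1) with support S such that ℕ \ S ∉ I and the gap number g(S) < ∞ (the gaps between consecutive blocks of S have bounded length). Then u_n x does not I-converge to 0 in ℝ/ℤ. -/
/-- Theorem Scg(b): if `u` is `b`-bounded, `I` is a translation invariant free ideal,
`ℕ \ S ∉ I` and the gap number `g(S)` is finite (gaps of `S` have bounded length), then
`u_n x` does not `I`-converge to `0` mod `1`. -/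
theorem stmt_15 (u b c : ℕ → ℕ) (x : ℝ)
    (hu0 : u 0 = 1) (humono : StrictMono u)
    (hb : ∀ n, u (n + 1) = b (n + 1) * u n)
    (hx0 : 0 ≤ x) (hx1 : x < 1)
    (hc0 : c 0 = 0)
    (hsum : x = ∑' n : ℕ, (c (n + 1) : ℝ) / (u (n + 1) : ℝ))
    (hclt : ∀ n, c (n + 1) < b (n + 1))
    (hcinf : {n : ℕ | c (n + 1) + 1 < b (n + 1)}.Infinite)
    (hbbdd : ∃ M : ℕ, ∀ n : ℕ, 1 ≤ n → b n ≤ M)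
    (I : Set (Set ℕ))
    (hne : I.Nonempty)
    (hunion : ∀ A B : Set ℕ, A ∈ I → B ∈ I → A ∪ B ∈ I)
    (hsubset : ∀ A B : Set ℕ, A ⊆ B → B ∈ I → A ∈ I)
    (hfree : ∀ A : Set ℕ, A.Finite → A ∈ I)
    (htrans : ∀ A ∈ I, ∀ z : ℤ, {m : ℕ | ∃ a ∈ A, (a : ℤ) + z = (m : ℤ)} ∈ I)
    (hSc : {n : ℕ | c n ≠ 0}ᶜ ∉ I)
    (hgap : ∃ ℓ : ℕ, ∀ n : ℕ, ∃ i ≤ ℓ, c (n + i) ≠ 0) :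
    ¬ ∀ ε : ℝ, 0 < ε →
      {n : ℕ | ε ≤ |(u n : ℝ) * x - (round ((u n : ℝ) * x) : ℝ)|} ∈ I := by
  obtain ⟨ℓ, hgap⟩ := hgap
  obtain ⟨M0, hM0⟩ := hbbdd
  set M : ℕ := max M0 2 with hMdef
  have hM2 : 2 ≤ M := le_max_right _ _
  have hMb : ∀ n, b (n + 1) ≤ M := fun n =>
    le_trans (hM0 (n + 1) (Nat.succ_le_succ (Nat.zero_le n))) (le_max_left _ _)
  have hu1 : ∀ n, 1 ≤ u n := fun n => hu0 ▸ humono.monotone (Nat.zero_le n)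
  have hupos : ∀ n, (0 : ℝ) < u n := fun n => by
    exact_mod_cast Nat.lt_of_lt_of_le Nat.zero_lt_one (hu1 n)
  have hb2 : ∀ n, 2 ≤ b (n + 1) := by
    intro n
    have h1 : u n < u (n + 1) := humono (Nat.lt_succ_self n)
    rw [hb n] at h1
    nlinarith [hu1 n]
  have hMR : (2 : ℝ) ≤ (M : ℝ) := by exact_mod_cast hM2
  -- growth
  have hugrow : ∀ n, (2 : ℝ) ^ n ≤ (u n : ℝ) := by
    intro n
    induction n with
    | zero => simp [hu0]
    | succ k ih =>
      have : ((u (k + 1) : ℕ) : ℝ) = (b (k + 1) : ℝ) * (u k : ℝ) := by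
        rw [hb k]; push_cast; ring
      rw [this, pow_succ]
      have hbk : (2 : ℝ) ≤ (b (k + 1) : ℝ) := by exact_mod_cast hb2 k
      nlinarith [hupos k, pow_pos (by norm_num : (0:ℝ) < 2) k]
  set f : ℕ → ℝ := fun k => (c (k + 1) : ℝ) / (u (k + 1) : ℝ) with hfdef
  have hf0 : ∀ k, 0 ≤ f k := fun k => div_nonneg (Nat.cast_nonneg _) (Nat.cast_nonneg _)
  have hfle : ∀ k, f k ≤ 1 / (u k : ℝ) - 1 / (u (k + 1) : ℝ) := by
    intro k
    have hcb : (c (k + 1) : ℝ) ≤ (b (k + 1) : ℝ) - 1 := by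
      have := hclt k
      have : c (k + 1) + 1 ≤ b (k + 1) := this
      have := (Nat.cast_le (α := ℝ)).2 this
      push_cast at this; linarith
    have huk1 : ((u (k + 1) : ℕ) : ℝ) = (b (k + 1) : ℝ) * (u k : ℝ) := by
      rw [hb k]; push_cast; ring
    have hbpos : (0 : ℝ) < (b (k + 1) : ℝ) := by
      have := hb2 k; positivity
    have hbne : ((b (k + 1) : ℝ)) ≠ 0 := ne_of_gt hbpos
    have hune : ((u k : ℝ)) ≠ 0 := ne_of_gt (hupos k)
    have hune1 : ((u (k + 1) : ℝ)) ≠ 0 := ne_of_gt (hupos (k + 1))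
    have h1 : f k ≤ ((b (k + 1) : ℝ) - 1) / (u (k + 1) : ℝ) :=
      div_le_div_of_nonneg_right hcb (hupos _).le
    have h2 : ((b (k + 1) : ℝ) - 1) / (u (k + 1) : ℝ)
        = 1 / (u k : ℝ) - 1 / (u (k + 1) : ℝ) := by
      rw [huk1]; field_simp
    linarith
  have hfle' : ∀ k, f k ≤ (1 / 2 : ℝ) ^ k := by
    intro k
    have h1 : f k ≤ 1 / (u k : ℝ) := by
      have := hfle k
      have h2 : 0 ≤ 1 / (u (k + 1) : ℝ) := by positivity
      linarith
    have h3 : 1 / (u k : ℝ) ≤ 1 / (2 : ℝ) ^ k :=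
      one_div_le_one_div_of_le (by positivity) (hugrow k)
    calc f k ≤ 1 / (u k : ℝ) := h1
      _ ≤ 1 / (2 : ℝ) ^ k := h3
      _ = (1 / 2 : ℝ) ^ k := by rw [one_div_pow]
  have hsummable : Summable f :=
    Summable.of_nonneg_of_le hf0 hfle'
      (summable_geometric_of_lt_one (by norm_num) (by norm_num))
  have hsummable' : ∀ m, Summable fun j => f (j + m) := fun m =>
    (summable_nat_add_iff m).2 hsummable
  have hpart : ∀ m k, ∑ j ∈ Finset.range k, f (j + m) ≤ 1 / (u m : ℝ) := by
    intro m k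
    have key : ∀ k, ∑ j ∈ Finset.range k, f (j + m)
        ≤ 1 / (u m : ℝ) - 1 / (u (m + k) : ℝ) := by
      intro k
      induction k with
      | zero => simp
      | succ n ih =>
        rw [Finset.sum_range_succ]
        have h1 : f (n + m) ≤ 1 / (u (n + m) : ℝ) - 1 / (u (n + m + 1) : ℝ) := hfle (n + m)
        have e1 : m + n = n + m := Nat.add_comm m n
        have e2 : m + (n + 1) = n + m + 1 := by omega
        rw [e1] at ih
        rw [e2]
        linarith
    have := key k
    have h2 : 0 ≤ 1 / (u (m + k) : ℝ) := by positivity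
    linarith
  set tail : ℕ → ℝ := fun m => ∑' j, f (j + m) with htaildef
  have htail_nonneg : ∀ m, 0 ≤ tail m := fun m => tsum_nonneg fun j => hf0 _
  have htail_le : ∀ m, tail m ≤ 1 / (u m : ℝ) := fun m =>
    Real.tsum_le_of_sum_range_le (fun j => hf0 _) (hpart m)
  have hdvd : ∀ m n, m ≤ n → u m ∣ u n := by
    intro m n hmn
    induction n with
    | zero => rw [Nat.le_zero.1 hmn]
    | succ k ih =>
      rcases Nat.lt_or_ge m (k + 1) with h | h
      · exact dvd_trans (ih (Nat.lt_succ_iff.1 h)) ⟨b (k + 1), by rw [hb k]; ring⟩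
      · rw [Nat.le_antisymm hmn h]
  -- the integer part
  set N : ℕ → ℕ := fun n => ∑ k ∈ Finset.range n, c (k + 1) * (u n / u (k + 1)) with hNdef
  have hkey : ∀ n, (u n : ℝ) * x = (N n : ℝ) + (u n : ℝ) * tail n := by
    intro n
    have hsplit := Summable.sum_add_tsum_nat_add n hsummable
    have hx : x = (∑ i ∈ Finset.range n, f i) + tail n := by
      rw [hsum]; exact hsplit.symm
    have hN : (N n : ℝ) = (u n : ℝ) * ∑ i ∈ Finset.range n, f i := by
      have hterm : ∀ k ∈ Finset.range n,
          ((c (k + 1) * (u n / u (k + 1)) : ℕ) : ℝ) = (u n : ℝ) * f k := by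
        intro k hk
        have hk' : k + 1 ≤ n := Finset.mem_range.1 hk
        have hdvd' : u (k + 1) ∣ u n := hdvd _ _ hk'
        have hne' : ((u (k + 1) : ℕ)) ≠ 0 := Nat.one_le_iff_ne_zero.1 (hu1 (k + 1))
        rw [Nat.cast_mul, Nat.cast_div hdvd' (by exact_mod_cast hne')]
        simp only [hfdef]
        rw [div_eq_mul_inv, div_eq_mul_inv]
        ring
      rw [hNdef]
      rw [Nat.cast_sum, Finset.mul_sum]
      exact Finset.sum_congr rfl hterm
    rw [hx, mul_add, hN]
  -- epsilon
  set ε : ℝ := (1 / (M : ℝ)) ^ (ℓ + 1) with hεdef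
  have hMinv : (0 : ℝ) < 1 / (M : ℝ) := by positivity
  have hMinv1 : 1 / (M : ℝ) ≤ 1 / 2 := one_div_le_one_div_of_le (by norm_num) hMR
  have hε : 0 < ε := pow_pos hMinv _
  have hεhalf : ε ≤ 1 / 2 := by
    calc ε ≤ (1 / (M : ℝ)) ^ 1 :=
          pow_le_pow_of_le_one hMinv.le (by linarith) (by omega)
      _ = 1 / (M : ℝ) := pow_one _
      _ ≤ 1 / 2 := hMinv1
  have hMgrow : ∀ n j, (u (n + j) : ℝ) ≤ (u n : ℝ) * (M : ℝ) ^ j := by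
    intro n j
    induction j with
    | zero => simp
    | succ k ih =>
      have e : n + (k + 1) = (n + k) + 1 := by omega
      rw [e, hb (n + k)]
      have hbM : ((b (n + k + 1) : ℕ) : ℝ) ≤ (M : ℝ) := by exact_mod_cast hMb (n + k)
      have hupos' : (0 : ℝ) ≤ (u (n + k) : ℝ) := (hupos _).le
      have hMpos : (0 : ℝ) ≤ (M : ℝ) := by positivity
      push_cast
      calc (b (n + k + 1) : ℝ) * (u (n + k) : ℝ) ≤ (M : ℝ) * ((u n : ℝ) * (M : ℝ) ^ k) := by
            apply mul_le_mul hbM ih hupos' hMpos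
        _ = (u n : ℝ) * (M : ℝ) ^ (k + 1) := by ring
  have hgood : ∀ n, c (n + 1) = 0 →
      ε ≤ |(u n : ℝ) * x - (round ((u n : ℝ) * x) : ℝ)| := by
    intro n hcn
    set t : ℝ := (u n : ℝ) * tail n with htdef
    -- tail n = tail (n + 1)
    have htshift : tail n = tail (n + 1) := by
      have h0 := Summable.tsum_eq_zero_add (hsummable' n)
      have hfn : f (0 + n) = 0 := by
        simp only [hfdef, Nat.zero_add, hcn]
        simp
      have e : ∀ j : ℕ, j + 1 + n = j + (n + 1) := fun j => by omega
      calc tail n = f (0 + n) + ∑' j, f (j + 1 + n) := h0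
        _ = ∑' j, f (j + (n + 1)) := by
            rw [hfn, zero_add]
            exact tsum_congr fun j => by rw [e j]
        _ = tail (n + 1) := rfl
    -- upper bound t ≤ 1/2
    have htle : t ≤ 1 / 2 := by
      have h1 : tail n ≤ 1 / (u (n + 1) : ℝ) := htshift ▸ htail_le (n + 1)
      have h2 : t ≤ (u n : ℝ) / (u (n + 1) : ℝ) := by
        rw [htdef, div_eq_mul_one_div]
        exact mul_le_mul_of_nonneg_left h1 (hupos n).le
      have h3 : (u n : ℝ) / (u (n + 1) : ℝ) ≤ 1 / 2 := by
        rw [div_le_div_iff₀ (hupos _) (by norm_num)]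
        have : ((u (n + 1) : ℕ) : ℝ) = (b (n + 1) : ℝ) * (u n : ℝ) := by
          rw [hb n]; push_cast; ring
        rw [this]
        have hb2' : (2 : ℝ) ≤ (b (n + 1) : ℝ) := by exact_mod_cast hb2 n
        nlinarith [hupos n]
      linarith
    -- lower bound t ≥ ε
    have htge : ε ≤ t := by
      obtain ⟨i, hiℓ, hci⟩ := hgap (n + 1)
      have hci' : 1 ≤ c (i + n + 1) := by
        have : n + 1 + i = i + n + 1 := by omega
        rw [this] at hci
        omega
      have hf_lb : 1 / (u (i + n + 1) : ℝ) ≤ f (i + n) := by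
        simp only [hfdef]
        apply div_le_div_of_nonneg_right _ (hupos _).le
        exact_mod_cast hci'
      have htail_lb : f (i + n) ≤ tail n := Summable.le_tsum (hsummable' n) i fun j _ => hf0 _
      have h1 : (u n : ℝ) / (u (i + n + 1) : ℝ) ≤ t := by
        rw [htdef, div_eq_mul_one_div]
        exact mul_le_mul_of_nonneg_left (hf_lb.trans htail_lb) (hupos n).le
      have h2 : (1 / (M : ℝ)) ^ (i + 1) ≤ (u n : ℝ) / (u (i + n + 1) : ℝ) := by
        have hgrow : (u (i + n + 1) : ℝ) ≤ (u n : ℝ) * (M : ℝ) ^ (i + 1) := by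
          have e : i + n + 1 = n + (i + 1) := by omega
          rw [e]; exact hMgrow n (i + 1)
        rw [div_pow, one_pow, div_le_div_iff₀ (by positivity) (hupos _)]
        calc 1 * (u (i + n + 1) : ℝ) = (u (i + n + 1) : ℝ) := one_mul _
          _ ≤ (u n : ℝ) * (M : ℝ) ^ (i + 1) := hgrow
      have h3 : ε ≤ (1 / (M : ℝ)) ^ (i + 1) := by
        rw [hεdef]
        apply pow_le_pow_of_le_one hMinv.le (by linarith) (by omega)
      linarith
    -- fract computation
    have ht01 : Int.fract ((u n : ℝ) * x) = t := by
      rw [hkey n]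
      have : ((N n : ℕ) : ℝ) = ((N n : ℤ) : ℝ) := by push_cast; rfl
      rw [this, Int.fract_intCast_add]
      exact Int.fract_eq_self.2 ⟨htdef ▸ mul_nonneg (hupos n).le (htail_nonneg n), by linarith⟩
    rw [abs_sub_round_eq_min, ht01]
    exact le_min htge (by linarith)
  -- final ideal argument
  intro H
  have hA := H ε hε
  have hZ : {n : ℕ | c (n + 1) = 0} ∈ I := hsubset _ _ (fun n hn => hgood n hn) hA
  have hZ1 := htrans _ hZ 1
  refine hSc (hsubset _
    ({m : ℕ | ∃ a ∈ {n : ℕ | c (n + 1) = 0}, (a : ℤ) + 1 = (m : ℤ)} ∪ {0}) ?_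
    (hunion _ _ hZ1 (hfree {0} (Set.finite_singleton 0))))
  intro n hn
  have hcn : c n = 0 := not_not.1 hn
  cases n with
  | zero => exact Or.inr rfl
  | succ k => exact Or.inl ⟨k, hcn, by push_cast; ring⟩
end

section
/- Let u be an arithmetic sequence with ratios b_n, I a translation invariant free ideal of ℕ, and x ∈ [0,1) with supp(x) ∉ I. If there exist real numbers 0 < m₁ ≤ m₂ < 1/2 such that c_n/b_n ∈ [m₁, m₂] for all n ∈ supp(x), then u_n x does not I-converge to 0 in ℝ/ℤ. -/
/-!
Since `u_{k+1} ∣ u_n` for `k < n`, `u_n x` is an integer plus `u_n` times the tail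
`∑_{j > n} c_j / u_j`. The digit bound `c_j < b_j` makes the tail after `n + 1` at most
`1 / u_{n+1}`, so this fractional part lies in
`[c_{n+1} / b_{n+1}, (c_{n+1} + 1) / b_{n+1}]`, hence in `[m₁, 2 m₂]` when `c_{n+1} ≥ 1`,
at distance at least `min m₁ (1 - 2 m₂) > 0` from the integers. So `supp(x) - 1` lies in
the set where `‖u_n x‖ ≥ min m₁ (1 - 2 m₂)`, and translation invariance would put
`supp(x)` into `I`.
-/

open Finset

lemma le_abs_intCast_add_sub_round {δ y : ℝ} (N : ℤ) (h₁ : δ ≤ y) (h₂ : y ≤ 1 - δ) :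
    δ ≤ |N + y - round (N + y)| := by
  rcases le_or_gt (round (N + y)) N with h | h
  · have : (round (N + y) : ℝ) ≤ N := by exact_mod_cast h
    exact le_abs.mpr (Or.inl (by linarith))
  · have : (N : ℝ) + 1 ≤ round (N + y) := by exact_mod_cast h
    exact le_abs.mpr (Or.inr (by linarith))

namespace CantorSeries

variable {u b c : ℕ → ℕ}

noncomputable def term (u c : ℕ → ℕ) (k : ℕ) : ℝ := c (k + 1) / u (k + 1)

-- `tail u c n = ∑_{j > n} c_j / u_j`: the indices are shifted by one, as in `term`.
noncomputable def tail (u c : ℕ → ℕ) (n : ℕ) : ℝ := ∑' k, term u c (k + n)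

lemma term_nonneg (k : ℕ) : 0 ≤ term u c k := by unfold term; positivity

lemma tail_nonneg (n : ℕ) : 0 ≤ tail u c n := tsum_nonneg fun _ => term_nonneg _

lemma mul_term {n : ℕ} (hu : u n ≠ 0) (hb : u (n + 1) = b (n + 1) * u n) :
    u n * term u c n = c (n + 1) / b (n + 1) := by
  rw [term, hb, Nat.cast_mul]
  field_simp

lemma term_add_inv_le {k : ℕ} (hu : 0 < u k) (hb : u (k + 1) = b (k + 1) * u k)
    (hc : c (k + 1) < b (k + 1)) : term u c k + 1 / u (k + 1) ≤ 1 / u k := by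
  have hb' : (c (k + 1) : ℝ) + 1 ≤ b (k + 1) := by exact_mod_cast hc
  have hb0 : (0 : ℝ) < b (k + 1) := by linarith [(c (k + 1)).cast_nonneg (α := ℝ)]
  rw [term, ← add_div, hb, Nat.cast_mul, div_le_div_iff₀ (by positivity) (by positivity)]
  nlinarith [(u k).cast_nonneg (α := ℝ)]

lemma sum_range_term_le (hu : ∀ n, 0 < u n) (hb : ∀ n, u (n + 1) = b (n + 1) * u n)
    (hc : ∀ n, c (n + 1) < b (n + 1)) (n K : ℕ) :
    ∑ k ∈ range K, term u c (k + n) ≤ 1 / u n :=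
  calc ∑ k ∈ range K, term u c (k + n)
      ≤ ∑ k ∈ range K, (1 / u (k + n) - 1 / u (k + 1 + n) : ℝ) := by
        refine sum_le_sum fun k _ => ?_
        rw [add_right_comm]
        linarith [term_add_inv_le (hu (k + n)) (hb (k + n)) (hc (k + n))]
    _ = 1 / u n - 1 / u (K + n) := by simpa using sum_range_sub' (fun i => (1 / u (i + n) : ℝ)) K
    _ ≤ 1 / u n := sub_le_self _ (by positivity)

lemma summable_term (hu : ∀ n, 0 < u n) (hb : ∀ n, u (n + 1) = b (n + 1) * u n)
    (hc : ∀ n, c (n + 1) < b (n + 1)) : Summable (term u c) :=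
  summable_of_sum_range_le term_nonneg (by simpa using sum_range_term_le hu hb hc 0)

lemma tail_le (hu : ∀ n, 0 < u n) (hb : ∀ n, u (n + 1) = b (n + 1) * u n)
    (hc : ∀ n, c (n + 1) < b (n + 1)) (n : ℕ) : tail u c n ≤ 1 / u n :=
  Real.tsum_le_of_sum_range_le (fun _ => term_nonneg _) (sum_range_term_le hu hb hc n)

lemma tail_eq_term_add (hs : Summable (term u c)) (n : ℕ) :
    tail u c n = term u c n + tail u c (n + 1) := by
  rw [tail, ((summable_nat_add_iff n).mpr hs).tsum_eq_zero_add, zero_add, tail]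
  simp only [add_right_comm _ 1 n, add_assoc]

lemma sum_range_add_tail (hs : Summable (term u c)) (n : ℕ) :
    ∑ k ∈ range n, term u c k + tail u c n = ∑' k, term u c k :=
  hs.sum_add_tsum_nat_add n

lemma dvd_of_le (hb : ∀ n, u (n + 1) = b (n + 1) * u n) {m n : ℕ} (hmn : m ≤ n) :
    u m ∣ u n := by
  induction n, hmn using Nat.le_induction with
  | base => rfl
  | succ n _ ih => exact ih.trans ⟨b (n + 1), by rw [hb, mul_comm]⟩

lemma exists_mul_sum_range_eq_natCast (hu : ∀ n, 0 < u n) (hb : ∀ n, u (n + 1) = b (n + 1) * u n)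
    (n : ℕ) : ∃ N : ℕ, u n * ∑ k ∈ range n, term u c k = N := by
  refine ⟨∑ k ∈ range n, c (k + 1) * (u n / u (k + 1)), ?_⟩
  rw [mul_sum, Nat.cast_sum]
  refine sum_congr rfl fun k hk => ?_
  rw [Nat.cast_mul, Nat.cast_div (dvd_of_le hb (mem_range.mp hk)) (by exact_mod_cast (hu _).ne'),
    term]
  ring

lemma mul_tail_mem_Icc (hu : ∀ n, 0 < u n) (hb : ∀ n, u (n + 1) = b (n + 1) * u n)
    (hc : ∀ n, c (n + 1) < b (n + 1)) (n : ℕ) :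
    u n * tail u c n ∈
      Set.Icc ((c (n + 1) : ℝ) / b (n + 1)) ((c (n + 1) + 1 : ℝ) / b (n + 1)) := by
  have hun : (u n : ℝ) ≠ 0 := by exact_mod_cast (hu n).ne'
  have hnext : u n * tail u c (n + 1) ≤ 1 / b (n + 1) :=
    calc u n * tail u c (n + 1) ≤ u n * (1 / u (n + 1)) :=
          mul_le_mul_of_nonneg_left (tail_le hu hb hc _) (Nat.cast_nonneg _)
      _ = 1 / b (n + 1) := by rw [hb, Nat.cast_mul]; field_simp
  rw [tail_eq_term_add (summable_term hu hb hc), mul_add, mul_term (hu n).ne' (hb n), add_div]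
  exact ⟨le_add_of_nonneg_right (mul_nonneg (Nat.cast_nonneg _) (tail_nonneg _)),
    add_le_add_right hnext _⟩

lemma min_le_abs_mul_tsum_term_sub_round (hu : ∀ n, 0 < u n)
    (hb : ∀ n, u (n + 1) = b (n + 1) * u n) (hc : ∀ n, c (n + 1) < b (n + 1))
    {m₁ m₂ : ℝ} {n : ℕ} (hcn : c (n + 1) ≠ 0)
    (hm₁ : m₁ ≤ c (n + 1) / b (n + 1)) (hm₂ : c (n + 1) / b (n + 1) ≤ m₂) :
    min m₁ (1 - 2 * m₂) ≤ |u n * ∑' k, term u c k - round (u n * ∑' k, term u c k)| := by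
  obtain ⟨N, hN⟩ := exists_mul_sum_range_eq_natCast (c := c) hu hb n
  obtain ⟨hlo, hhi⟩ := mul_tail_mem_Icc hu hb hc n
  have hc₁ : (1 : ℝ) ≤ c (n + 1) := by exact_mod_cast Nat.one_le_iff_ne_zero.mpr hcn
  have hdouble : (c (n + 1) + 1 : ℝ) / b (n + 1) ≤ 2 * (c (n + 1) / b (n + 1)) := by
    rw [← mul_div_assoc]
    gcongr
    linarith
  have key := le_abs_intCast_add_sub_round (δ := min m₁ (1 - 2 * m₂)) N
    ((min_le_left _ _).trans (hm₁.trans hlo)) (by linarith [min_le_right m₁ (1 - 2 * m₂)])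
  rwa [Int.cast_natCast, ← hN, ← mul_add, sum_range_add_tail (summable_term hu hb hc)] at key

end CantorSeries

open CantorSeries

lemma setOf_mem_of_setOf_succ_mem {I : Set (Set ℕ)}
    (hsubset : ∀ A B : Set ℕ, A ⊆ B → B ∈ I → A ∈ I)
    (htrans : ∀ A ∈ I, ∀ z : ℤ, {m : ℕ | ∃ a ∈ A, (a : ℤ) + z = (m : ℤ)} ∈ I)
    {p : ℕ → Prop} (h0 : ¬ p 0) (h : {n | p (n + 1)} ∈ I) : {n | p n} ∈ I := by
  refine hsubset _ _ ?_ (htrans _ h 1)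
  rintro (_ | n) hn
  · exact absurd hn h0
  · exact ⟨n, hn, by push_cast; rfl⟩

theorem stmt_16_general (u b c : ℕ → ℕ) (x : ℝ)
    (hu0 : u 0 = 1) (humono : StrictMono u)
    (hb : ∀ n, u (n + 1) = b (n + 1) * u n)
    (hc0 : c 0 = 0)
    (hsum : x = ∑' n : ℕ, (c (n + 1) : ℝ) / (u (n + 1) : ℝ))
    (hclt : ∀ n, c (n + 1) < b (n + 1))
    (I : Set (Set ℕ))
    (hsubset : ∀ A B : Set ℕ, A ⊆ B → B ∈ I → A ∈ I)
    (htrans : ∀ A ∈ I, ∀ z : ℤ, {m : ℕ | ∃ a ∈ A, (a : ℤ) + z = (m : ℤ)} ∈ I)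
    (hS : {n : ℕ | c n ≠ 0} ∉ I)
    (m₁ m₂ : ℝ) (hm₁ : 0 < m₁) (hm₂ : m₂ < 1 / 2)
    (hratio : ∀ n : ℕ, c n ≠ 0 →
      m₁ ≤ (c n : ℝ) / (b n : ℝ) ∧ (c n : ℝ) / (b n : ℝ) ≤ m₂) :
    ¬ ∀ ε : ℝ, 0 < ε →
      {n : ℕ | ε ≤ |(u n : ℝ) * x - (round ((u n : ℝ) * x) : ℝ)|} ∈ I := by
  intro hconv
  have hu : ∀ n, 0 < u n := fun n => (by omega : 0 < u 0).trans_le (humono.monotone n.zero_le)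
  subst hsum
  refine hS (setOf_mem_of_setOf_succ_mem hsubset htrans (by simpa using hc0) ?_)
  refine hsubset _ _ (fun n hn => ?_) (hconv (min m₁ (1 - 2 * m₂)) (lt_min hm₁ (by linarith)))
  obtain ⟨h₁, h₂⟩ := hratio (n + 1) hn
  exact min_le_abs_mul_tsum_term_sub_round hu hb hclt hn h₁ h₂

/-- Proposition: if `supp(x) ∉ I` and there are `0 < m₁ ≤ m₂ < 1/2` with
`c_n / b_n ∈ [m₁, m₂]` for all `n ∈ supp(x)`, then `u_n x` does not `I`-converge to `0`
mod `1`. -/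
theorem stmt_16 (u b c : ℕ → ℕ) (x : ℝ)
    (hu0 : u 0 = 1) (humono : StrictMono u)
    (hb : ∀ n, u (n + 1) = b (n + 1) * u n)
    (hx0 : 0 ≤ x) (hx1 : x < 1)
    (hc0 : c 0 = 0)
    (hsum : x = ∑' n : ℕ, (c (n + 1) : ℝ) / (u (n + 1) : ℝ))
    (hclt : ∀ n, c (n + 1) < b (n + 1))
    (hcinf : {n : ℕ | c (n + 1) + 1 < b (n + 1)}.Infinite)
    (I : Set (Set ℕ))
    (hne : I.Nonempty)
    (hunion : ∀ A B : Set ℕ, A ∈ I → B ∈ I → A ∪ B ∈ I)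
    (hsubset : ∀ A B : Set ℕ, A ⊆ B → B ∈ I → A ∈ I)
    (hfree : ∀ A : Set ℕ, A.Finite → A ∈ I)
    (htrans : ∀ A ∈ I, ∀ z : ℤ, {m : ℕ | ∃ a ∈ A, (a : ℤ) + z = (m : ℤ)} ∈ I)
    (hS : {n : ℕ | c n ≠ 0} ∉ I)
    (m₁ m₂ : ℝ) (hm₁ : 0 < m₁) (hm₁₂ : m₁ ≤ m₂) (hm₂ : m₂ < 1 / 2)
    (hratio : ∀ n : ℕ, c n ≠ 0 →
      m₁ ≤ (c n : ℝ) / (b n : ℝ) ∧ (c n : ℝ) / (b n : ℝ) ≤ m₂) :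
    ¬ ∀ ε : ℝ, 0 < ε →
      {n : ℕ | ε ≤ |(u n : ℝ) * x - (round ((u n : ℝ) * x) : ℝ)|} ∈ I :=
  stmt_16_general u b c x hu0 humono hb hc0 hsum hclt I hsubset htrans hS m₁ m₂ hm₁ hm₂ hratio
end

section
/- Let u be an arithmetic sequence, I a translation invariant free ideal of ℕ, and B ⊆ ℕ. Then there exists x ∈ [0,1) with supp(x) ⊆ B such that u_n x does not I-converge to 0 in ℝ/ℤ, if and only if B ∉ I. -/
/-!
Put `r n = u n * ∑_{k > n} c k / u k`. Then `u n x ≡ r n (mod 1)`, and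
`0 ≤ r n ≤ u n / u m ≤ 2^(n-m)` as soon as the digits `c k` with `n < k ≤ m` vanish. Hence
`‖u n x‖ ≥ ε > 2^(-j)` forces a nonzero digit in `(n, n + j]`, so `{n | ‖u n x‖ ≥ ε}` lies in
the finite union of the translates `B - i`, `1 ≤ i ≤ j`, which belongs to `I` when `B` does.
Conversely, if `B ∉ I` then one parity class `D` of `B` is not in `I`; the digits `⌊b k / 2⌋`
on `D` and `0` elsewhere give `1/4 ≤ r n ≤ 3/4` whenever `n + 1 ∈ D`, so
`{n | ‖u n x‖ ≥ 1/4} ⊇ D - 1 ∉ I`.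
-/

open Filter Topology

theorem hasSum_sub_succ_of_antitone {a : ℕ → ℝ} (ha : Antitone a)
    (h0 : Tendsto a atTop (𝓝 0)) : HasSum (fun n => a n - a (n + 1)) (a 0) := by
  rw [hasSum_iff_tendsto_nat_of_nonneg fun n => sub_nonneg.2 (ha n.le_succ)]
  simp_rw [Finset.sum_range_sub']
  simpa using tendsto_const_nhds.sub (h0.comp (tendsto_add_atTop_nat 0))

theorem le_abs_int_add_sub_int (M z : ℤ) {t δ : ℝ} (hδt : δ ≤ t) (htδ : t ≤ 1 - δ) :
    δ ≤ |(M + t) - z| := by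
  rcases le_or_gt z M with hzM | hzM
  · have : (z : ℝ) ≤ M := by exact_mod_cast hzM
    exact le_abs.2 (Or.inl (by linarith))
  · have : (M : ℝ) + 1 ≤ z := by exact_mod_cast hzM
    exact le_abs.2 (Or.inr (by linarith))

theorem cast_div_le_cast_sub_one_div {c b : ℕ} (h : c < b) (v : ℕ) :
    (c : ℝ) / v ≤ ((b : ℝ) - 1) / v := by
  gcongr
  have := Nat.cast_le (α := ℝ).2 h
  push_cast at this
  linarith

structure IsArithmeticSeq (u b : ℕ → ℕ) : Prop where
  pos : ∀ n, 0 < u n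
  succ_eq : ∀ n, u (n + 1) = b (n + 1) * u n
  two_le : ∀ n, 2 ≤ b (n + 1)

noncomputable def cantorTail (u c : ℕ → ℕ) (n : ℕ) : ℝ :=
  ∑' j, (c (n + j + 1) : ℝ) / u (n + j + 1)

theorem cantorTail_nonneg (u c : ℕ → ℕ) (n : ℕ) : 0 ≤ cantorTail u c n :=
  tsum_nonneg fun _ => by positivity

open Classical in
noncomputable def halfDigits (b : ℕ → ℕ) (D : Set ℕ) : ℕ → ℕ
  | 0 => 0
  | k + 1 => if k + 1 ∈ D then b (k + 1) / 2 else 0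

theorem halfDigits_of_mem {b : ℕ → ℕ} {D : Set ℕ} {n : ℕ} (hn : n + 1 ∈ D) :
    halfDigits b D (n + 1) = b (n + 1) / 2 :=
  if_pos hn

theorem halfDigits_of_not_mem {b : ℕ → ℕ} {D : Set ℕ} {n : ℕ} (hn : n + 1 ∉ D) :
    halfDigits b D (n + 1) = 0 :=
  if_neg hn

theorem support_halfDigits_subset (b : ℕ → ℕ) (D : Set ℕ) :
    {k | halfDigits b D k ≠ 0} ⊆ D := by
  rintro (_ | n) hn
  · exact absurd rfl hn
  · by_contra h
    exact hn (halfDigits_of_not_mem h)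

namespace IsArithmeticSeq

variable {u b c : ℕ → ℕ}

theorem of_strictMono (hu0 : u 0 = 1) (humono : StrictMono u)
    (hb : ∀ n, u (n + 1) = b (n + 1) * u n) : IsArithmeticSeq u b :=
  have pos n : 0 < u n := one_pos.trans_le (hu0 ▸ humono.monotone n.zero_le)
  ⟨pos, hb, fun n => (lt_mul_iff_one_lt_left (pos n)).1 (hb n ▸ humono n.lt_succ_self)⟩

theorem dvd_of_le (hu : IsArithmeticSeq u b) {k n : ℕ} (hkn : k ≤ n) : u k ∣ u n := by
  induction n, hkn using Nat.le_induction with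
  | base => rfl
  | succ n _ ih => exact ih.trans ⟨b (n + 1), by rw [hu.succ_eq n, mul_comm]⟩

theorem monotone (hu : IsArithmeticSeq u b) : Monotone u :=
  monotone_nat_of_le_succ fun n =>
    hu.succ_eq n ▸ Nat.le_mul_of_pos_left _ (by linarith [hu.two_le n])

theorem mul_two_pow_le (hu : IsArithmeticSeq u b) (n j : ℕ) : u n * 2 ^ j ≤ u (n + j) := by
  induction j with
  | zero => simp
  | succ j ih =>
    rw [← add_assoc, hu.succ_eq, pow_succ, ← mul_assoc]
    nlinarith [hu.two_le (n + j)]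

theorem div_le_half_pow (hu : IsArithmeticSeq u b) (n j : ℕ) :
    (u n : ℝ) / u (n + j) ≤ (1 / 2) ^ j := by
  have hgrow : (u n : ℝ) * 2 ^ j ≤ u (n + j) := by exact_mod_cast hu.mul_two_pow_le n j
  rw [div_le_iff₀ (by exact_mod_cast hu.pos _), one_div, inv_pow,
    le_inv_mul_iff₀ (by positivity)]
  linarith

theorem sub_one_div_eq (hu : IsArithmeticSeq u b) (n : ℕ) :
    ((b (n + 1) : ℝ) - 1) / u (n + 1) = 1 / u n - 1 / u (n + 1) := by
  have hun : (u n : ℝ) ≠ 0 := by exact_mod_cast (hu.pos n).ne'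
  have hbn : (b (n + 1) : ℝ) ≠ 0 := by
    exact_mod_cast (by linarith [hu.two_le n] : b (n + 1) ≠ 0)
  rw [show (u (n + 1) : ℝ) = b (n + 1) * u n by exact_mod_cast hu.succ_eq n]
  field_simp

theorem hasSum_sub_one_div (hu : IsArithmeticSeq u b) (n : ℕ) :
    HasSum (fun j => ((b (n + j + 1) : ℝ) - 1) / u (n + j + 1)) (1 / u n) := by
  have hanti : Antitone fun j => (1 : ℝ) / u (n + j) := fun i j hij =>
    one_div_le_one_div_of_le (by exact_mod_cast hu.pos _)
      (Nat.cast_le.2 (hu.monotone (Nat.add_le_add_left hij n)))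
  have hzero : Tendsto (fun j => (1 : ℝ) / u (n + j)) atTop (𝓝 0) := by
    refine squeeze_zero (fun j => by positivity) (fun j => ?_)
      (tendsto_pow_atTop_nhds_zero_of_lt_one (r := 1 / 2) (by norm_num) (by norm_num))
    refine (div_le_div_of_nonneg_right ?_ (Nat.cast_nonneg _)).trans (hu.div_le_half_pow n j)
    exact_mod_cast hu.pos n
  convert hasSum_sub_succ_of_antitone hanti hzero using 1
  · exact funext fun j => hu.sub_one_div_eq (n + j)
  · simp

theorem summable_cantorTail (hu : IsArithmeticSeq u b) (hc : ∀ n, c (n + 1) < b (n + 1))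
    (n : ℕ) : Summable fun j => (c (n + j + 1) : ℝ) / u (n + j + 1) :=
  (hu.hasSum_sub_one_div n).summable.of_nonneg_of_le (fun _ => by positivity)
    fun j => cast_div_le_cast_sub_one_div (hc (n + j)) _

theorem cantorTail_le (hu : IsArithmeticSeq u b) (hc : ∀ n, c (n + 1) < b (n + 1)) (n : ℕ) :
    cantorTail u c n ≤ 1 / u n :=
  (hu.hasSum_sub_one_div n).tsum_eq ▸ (hu.summable_cantorTail hc n).tsum_le_tsum
    (fun j => cast_div_le_cast_sub_one_div (hc (n + j)) _) (hu.hasSum_sub_one_div n).summable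

theorem cantorTail_lt (hu : IsArithmeticSeq u b) (hc : ∀ n, c (n + 1) < b (n + 1)) {n : ℕ}
    (h : ∃ j, c (n + j + 1) + 1 < b (n + j + 1)) : cantorTail u c n < 1 / u n := by
  obtain ⟨j, hj⟩ := h
  rw [← (hu.hasSum_sub_one_div n).tsum_eq]
  refine Summable.tsum_lt_tsum_of_nonneg (i := j) (fun _ => by positivity)
    (fun j => cast_div_le_cast_sub_one_div (hc (n + j)) _) ?_
    (hu.hasSum_sub_one_div n).summable
  have hpos : (0 : ℝ) < u (n + j + 1) := by exact_mod_cast hu.pos _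
  have := Nat.cast_lt (α := ℝ).2 hj
  push_cast at this
  gcongr
  linarith

theorem cantorTail_eq_add (hu : IsArithmeticSeq u b) (hc : ∀ n, c (n + 1) < b (n + 1))
    (n : ℕ) : cantorTail u c n = c (n + 1) / u (n + 1) + cantorTail u c (n + 1) := by
  rw [cantorTail, (hu.summable_cantorTail hc n).tsum_eq_zero_add, cantorTail]
  simp only [add_zero]
  exact congrArg _ (tsum_congr fun j => by rw [show n + (j + 1) + 1 = n + 1 + j + 1 by omega])

theorem cantorTail_eq_of_forall_eq_zero (hu : IsArithmeticSeq u b)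
    (hc : ∀ n, c (n + 1) < b (n + 1)) {n m : ℕ} (hnm : n ≤ m)
    (h0 : ∀ k, n < k → k ≤ m → c k = 0) : cantorTail u c n = cantorTail u c m := by
  induction m, hnm using Nat.le_induction with
  | base => rfl
  | succ m hnm ih =>
    rw [ih fun k hk hkm => h0 k hk (by omega), hu.cantorTail_eq_add hc m,
      h0 (m + 1) (by omega) le_rfl]
    simp

theorem cantorTail_zero_eq (hu : IsArithmeticSeq u b) (hc : ∀ n, c (n + 1) < b (n + 1))
    (n : ℕ) : cantorTail u c 0 =
      ∑ k ∈ Finset.range n, (c (k + 1) : ℝ) / u (k + 1) + cantorTail u c n := by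
  induction n with
  | zero => simp
  | succ n ih => rw [Finset.sum_range_succ, ih, hu.cantorTail_eq_add hc n, add_assoc]

theorem exists_int_mul_cantorTail (hu : IsArithmeticSeq u b) (hc : ∀ n, c (n + 1) < b (n + 1))
    (n : ℕ) : ∃ M : ℤ, u n * cantorTail u c 0 = M + u n * cantorTail u c n := by
  refine ⟨((∑ k ∈ Finset.range n, c (k + 1) * (u n / u (k + 1)) : ℕ) : ℤ), ?_⟩
  rw [hu.cantorTail_zero_eq hc n, mul_add, Finset.mul_sum, Int.cast_natCast, Nat.cast_sum]
  congr 1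
  refine Finset.sum_congr rfl fun k hk => ?_
  rw [Nat.cast_mul, Nat.cast_div (hu.dvd_of_le (Finset.mem_range.1 hk))
    (by exact_mod_cast (hu.pos _).ne')]
  ring

theorem mul_cantorTail_eq (hu : IsArithmeticSeq u b) (hc : ∀ n, c (n + 1) < b (n + 1))
    (n : ℕ) : (b (n + 1) : ℝ) * (u n * cantorTail u c n) =
      c (n + 1) + u (n + 1) * cantorTail u c (n + 1) := by
  have hu1 : (u (n + 1) : ℝ) = b (n + 1) * u n := by exact_mod_cast hu.succ_eq n
  have hpos : (u (n + 1) : ℝ) ≠ 0 := by exact_mod_cast (hu.pos _).ne'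
  rw [hu.cantorTail_eq_add hc n, ← mul_assoc, mul_add, ← hu1]
  field_simp

theorem mul_cantorTail_le (hu : IsArithmeticSeq u b) (hc : ∀ n, c (n + 1) < b (n + 1))
    (n j : ℕ) : u n * cantorTail u c (n + j) ≤ (1 / 2) ^ j := by
  refine (mul_le_mul_of_nonneg_left (hu.cantorTail_le hc _) (Nat.cast_nonneg _)).trans ?_
  rw [mul_one_div]
  exact hu.div_le_half_pow n j

theorem exists_digit_ne_zero_of_le_abs_sub_round (hu : IsArithmeticSeq u b)
    (hc : ∀ n, c (n + 1) < b (n + 1)) {n j : ℕ} {ε : ℝ} (hj : (1 / 2) ^ j < ε)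
    (hn : ε ≤ |u n * cantorTail u c 0 - round (u n * cantorTail u c 0)|) :
    ∃ k, n < k ∧ k ≤ n + j ∧ c k ≠ 0 := by
  by_contra! h0
  obtain ⟨M, hM⟩ := hu.exists_int_mul_cantorTail hc n
  have hsmall : u n * cantorTail u c n ≤ (1 / 2) ^ j := by
    rw [hu.cantorTail_eq_of_forall_eq_zero hc (Nat.le_add_right n j) h0]
    exact hu.mul_cantorTail_le hc n j
  have hround := round_le (u n * cantorTail u c 0) M
  rw [hM] at hn
  rw [hM, add_sub_cancel_left,
    abs_of_nonneg (mul_nonneg (Nat.cast_nonneg _) (cantorTail_nonneg u c n))] at hround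
  linarith

theorem halfDigits_lt (hu : IsArithmeticSeq u b) (D : Set ℕ) (n : ℕ) :
    halfDigits b D (n + 1) < b (n + 1) := by
  have := hu.two_le n
  by_cases hn : n + 1 ∈ D
  · rw [halfDigits_of_mem hn]; omega
  · rw [halfDigits_of_not_mem hn]; omega

theorem infinite_setOf_halfDigits_add_one_lt (hu : IsArithmeticSeq u b) {D : Set ℕ}
    (hD : ∀ k ∈ D, k + 1 ∉ D) : {n | halfDigits b D (n + 1) + 1 < b (n + 1)}.Infinite := by
  have hnot : ∀ n, n + 1 ∉ D → halfDigits b D (n + 1) + 1 < b (n + 1) := fun n hn => by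
    rw [halfDigits_of_not_mem hn]; have := hu.two_le n; omega
  refine Set.infinite_of_forall_exists_gt fun a => ?_
  by_cases ha : a + 2 ∈ D
  · exact ⟨a + 2, hnot _ (hD _ ha), by omega⟩
  · exact ⟨a + 1, hnot _ ha, by omega⟩

theorem quarter_le_mul_cantorTail (hu : IsArithmeticSeq u b) {D : Set ℕ}
    (hD : ∀ k ∈ D, k + 1 ∉ D) {n : ℕ} (hn : n + 1 ∈ D) :
    1 / 4 ≤ u n * cantorTail u (halfDigits b D) n ∧
      u n * cantorTail u (halfDigits b D) n ≤ 3 / 4 := by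
  have hc := hu.halfDigits_lt D
  -- `b r_n = ⌊b / 2⌋ + r_{n+1}` for `r_k = u k * cantorTail k`, and `r_{n+1} ≤ 1 / 2` because
  -- the digit at `n + 2` vanishes.
  have hrec := hu.mul_cantorTail_eq hc n
  have hnext : u (n + 1) * cantorTail u (halfDigits b D) (n + 1) ≤ 1 / 2 := by
    rw [hu.cantorTail_eq_of_forall_eq_zero hc (Nat.le_succ (n + 1)) fun k hk hk2 => by
      rw [show k = n + 1 + 1 by omega]; exact halfDigits_of_not_mem (hD _ hn)]
    simpa using hu.mul_cantorTail_le hc (n + 1) 1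
  have hnext0 : 0 ≤ (u (n + 1) : ℝ) * cantorTail u (halfDigits b D) (n + 1) :=
    mul_nonneg (Nat.cast_nonneg _) (cantorTail_nonneg _ _ _)
  rw [halfDigits_of_mem hn] at hrec
  have hb2 : (2 : ℝ) ≤ b (n + 1) := by exact_mod_cast hu.two_le n
  have hhalf : 2 * ((b (n + 1) / 2 : ℕ) : ℝ) ≤ b (n + 1) ∧
      (b (n + 1) : ℝ) ≤ 2 * ((b (n + 1) / 2 : ℕ) : ℝ) + 1 := by
    constructor <;> exact_mod_cast (by omega)
  constructor <;> nlinarith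

theorem quarter_le_abs_sub_round (hu : IsArithmeticSeq u b) {D : Set ℕ}
    (hD : ∀ k ∈ D, k + 1 ∉ D) {n : ℕ} (hn : n + 1 ∈ D) :
    1 / 4 ≤ |u n * cantorTail u (halfDigits b D) 0 -
      round (u n * cantorTail u (halfDigits b D) 0)| := by
  obtain ⟨M, hM⟩ := hu.exists_int_mul_cantorTail (hu.halfDigits_lt D) n
  obtain ⟨hlow, hhigh⟩ := hu.quarter_le_mul_cantorTail hD hn
  rw [hM]
  exact le_abs_int_add_sub_int M _ hlow (by linarith)

end IsArithmeticSeq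

structure IsInvariantFreeIdeal (I : Set (Set ℕ)) : Prop where
  union_mem : ∀ A B : Set ℕ, A ∈ I → B ∈ I → A ∪ B ∈ I
  mem_of_subset : ∀ A B : Set ℕ, A ⊆ B → B ∈ I → A ∈ I
  finite_mem : ∀ A : Set ℕ, A.Finite → A ∈ I
  shift_mem : ∀ A ∈ I, ∀ z : ℤ, {m : ℕ | ∃ a ∈ A, (a : ℤ) + z = (m : ℤ)} ∈ I

namespace IsInvariantFreeIdeal

variable {I : Set (Set ℕ)}

theorem biUnion_finset_mem {ι : Type*} (hI : IsInvariantFreeIdeal I) (s : Finset ι)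
    {f : ι → Set ℕ} (hf : ∀ i ∈ s, f i ∈ I) : ⋃ i ∈ s, f i ∈ I := by
  classical
  induction s using Finset.induction_on with
  | empty => simpa using hI.finite_mem ∅ Set.finite_empty
  | insert i s _ ih =>
    rw [Finset.set_biUnion_insert]
    exact hI.union_mem _ _ (hf i (Finset.mem_insert_self i s))
      (ih fun k hk => hf k (Finset.mem_insert_of_mem hk))

theorem preimage_add_mem_iff (hI : IsInvariantFreeIdeal I) (A : Set ℕ) (j : ℕ) :
    {m | m + j ∈ A} ∈ I ↔ A ∈ I := by
  constructor
  · intro h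
    refine hI.mem_of_subset _ _ (fun m hm => ?_)
      (hI.union_mem _ _ (hI.shift_mem _ h j) (hI.finite_mem _ (Set.finite_Iio j)))
    by_cases hmj : j ≤ m
    · refine Or.inl (show ∃ a ∈ {m | m + j ∈ A}, (a : ℤ) + j = m from ⟨m - j, ?_, ?_⟩)
      · simpa [Nat.sub_add_cancel hmj] using hm
      · push_cast [hmj]
        ring
    · exact Or.inr (not_le.1 hmj)
  · intro h
    refine hI.mem_of_subset _ _ (fun m hm => ?_) (hI.shift_mem A h (-j))
    exact ⟨m + j, hm, by push_cast; ring⟩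

theorem exists_mod_two_not_mem (hI : IsInvariantFreeIdeal I) {B : Set ℕ} (hB : B ∉ I) :
    ∃ r, {m ∈ B | m % 2 = r} ∉ I := by
  by_contra! h
  refine hB (hI.mem_of_subset _ _ (fun m hm => ?_) (hI.union_mem _ _ (h 0) (h 1)))
  rcases Nat.mod_two_eq_zero_or_one m with hr | hr
  exacts [Or.inl ⟨hm, hr⟩, Or.inr ⟨hm, hr⟩]

theorem setOf_le_abs_sub_round_mem (hI : IsInvariantFreeIdeal I) {u b c : ℕ → ℕ}
    (hu : IsArithmeticSeq u b) (hc : ∀ n, c (n + 1) < b (n + 1)) {B : Set ℕ}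
    (hcB : {n | c n ≠ 0} ⊆ B) (hB : B ∈ I) {ε : ℝ} (hε : 0 < ε) :
    {n | ε ≤ |u n * cantorTail u c 0 - round (u n * cantorTail u c 0)|} ∈ I := by
  obtain ⟨j, hj⟩ := exists_pow_lt_of_lt_one hε (by norm_num : (1 / 2 : ℝ) < 1)
  refine hI.mem_of_subset _ (⋃ i ∈ Finset.range j, {m | m + (i + 1) ∈ B}) (fun n hn => ?_)
    (hI.biUnion_finset_mem _ fun i _ => (hI.preimage_add_mem_iff B _).2 hB)
  obtain ⟨k, hnk, hkj, hck⟩ := hu.exists_digit_ne_zero_of_le_abs_sub_round hc hj hn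
  simp only [Set.mem_iUnion, Finset.mem_range, Set.mem_ofPred_eq]
  exact ⟨k - n - 1, by omega, by rw [show n + (k - n - 1 + 1) = k by omega]; exact hcB hck⟩

end IsInvariantFreeIdeal

theorem stmt_17_general (u b : ℕ → ℕ)
    (hu0 : u 0 = 1) (humono : StrictMono u)
    (hb : ∀ n, u (n + 1) = b (n + 1) * u n)
    (I : Set (Set ℕ))
    (hunion : ∀ A B : Set ℕ, A ∈ I → B ∈ I → A ∪ B ∈ I)
    (hsubset : ∀ A B : Set ℕ, A ⊆ B → B ∈ I → A ∈ I)
    (hfree : ∀ A : Set ℕ, A.Finite → A ∈ I)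
    (htrans : ∀ A ∈ I, ∀ z : ℤ, {m : ℕ | ∃ a ∈ A, (a : ℤ) + z = (m : ℤ)} ∈ I)
    (B : Set ℕ) :
    (∃ x : ℝ, ∃ c : ℕ → ℕ, 0 ≤ x ∧ x < 1 ∧ c 0 = 0 ∧
      x = ∑' n : ℕ, (c (n + 1) : ℝ) / (u (n + 1) : ℝ) ∧
      (∀ n, c (n + 1) < b (n + 1)) ∧
      {n : ℕ | c (n + 1) + 1 < b (n + 1)}.Infinite ∧
      {n : ℕ | c n ≠ 0} ⊆ B ∧
      ¬ ∀ ε : ℝ, 0 < ε →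
        {n : ℕ | ε ≤ |(u n : ℝ) * x - (round ((u n : ℝ) * x) : ℝ)|} ∈ I) ↔
    B ∉ I := by
  have hu := IsArithmeticSeq.of_strictMono hu0 humono hb
  have hI : IsInvariantFreeIdeal I := ⟨hunion, hsubset, hfree, htrans⟩
  have htail (c : ℕ → ℕ) : ∑' n, (c (n + 1) : ℝ) / u (n + 1) = cantorTail u c 0 := by
    simp only [cantorTail, zero_add]
  constructor
  · rintro ⟨x, c, -, -, -, rfl, hc, -, hcB, hx⟩ hB
    rw [htail] at hx
    exact hx fun ε hε => hI.setOf_le_abs_sub_round_mem hu hc hcB hB hε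
  · intro hB
    obtain ⟨r, hr⟩ := hI.exists_mod_two_not_mem hB
    have hD : ∀ k ∈ {m ∈ B | m % 2 = r}, k + 1 ∉ {m ∈ B | m % 2 = r} :=
      fun k hk hk1 => by have := hk.2; have := hk1.2; omega
    have hc := hu.halfDigits_lt {m ∈ B | m % 2 = r}
    have hinf := hu.infinite_setOf_halfDigits_add_one_lt hD
    refine ⟨_, _, cantorTail_nonneg _ _ 0, ?_, rfl, (htail _).symm, hc, hinf,
      (support_halfDigits_subset _ _).trans fun m hm => hm.1, fun hconv => hr ?_⟩
    · obtain ⟨n, hn⟩ := hinf.nonempty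
      simpa [hu0] using hu.cantorTail_lt hc (n := 0) ⟨n, by simpa using hn⟩
    · exact (hI.preimage_add_mem_iff _ 1).1 (hsubset _ _
        (fun n hn => hu.quarter_le_abs_sub_round hD hn) (hconv _ (by norm_num)))

/-- Corollary 2.14: for an arithmetic sequence `u` and a translation invariant proper free
ideal `I`, there exists `x ∈ [0,1)` with `supp(x) ⊆ B` such that `u_n x` does not
`I`-converge to `0` mod `1`, if and only if `B ∉ I`. -/
theorem stmt_17 (u b : ℕ → ℕ)
    (hu0 : u 0 = 1) (humono : StrictMono u)
    (hb : ∀ n, u (n + 1) = b (n + 1) * u n)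
    (I : Set (Set ℕ))
    (hne : I.Nonempty)
    (hunion : ∀ A B : Set ℕ, A ∈ I → B ∈ I → A ∪ B ∈ I)
    (hsubset : ∀ A B : Set ℕ, A ⊆ B → B ∈ I → A ∈ I)
    (hfree : ∀ A : Set ℕ, A.Finite → A ∈ I)
    (hproper : Set.univ ∉ I)
    (htrans : ∀ A ∈ I, ∀ z : ℤ, {m : ℕ | ∃ a ∈ A, (a : ℤ) + z = (m : ℤ)} ∈ I)
    (B : Set ℕ) :
    (∃ x : ℝ, ∃ c : ℕ → ℕ, 0 ≤ x ∧ x < 1 ∧ c 0 = 0 ∧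
      x = ∑' n : ℕ, (c (n + 1) : ℝ) / (u (n + 1) : ℝ) ∧
      (∀ n, c (n + 1) < b (n + 1)) ∧
      {n : ℕ | c (n + 1) + 1 < b (n + 1)}.Infinite ∧
      {n : ℕ | c n ≠ 0} ⊆ B ∧
      ¬ ∀ ε : ℝ, 0 < ε →
        {n : ℕ | ε ≤ |(u n : ℝ) * x - (round ((u n : ℝ) * x) : ℝ)|} ∈ I) ↔
    B ∉ I :=
  stmt_17_general u b hu0 humono hb I hunion hsubset hfree htrans B
end

section
/- The ideal I_d = {A ⊆ ℕ : the upper natural density of A is 0} does not satisfy property (DL): there exists an increasing sequence (A_n) of subsets of ℕ with A_n ↑ ℕ and ℕ \ A_n ∉ I_d for every n, such that every pseudounion U of (A_n) (a set with A_n \ U finite for all n) has complement in I_d, i.e., d(ℕ \ U) = 0. One such witness is A_n = ℕ \ 2^n ℕ. -/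
/-!
The witness is `A n = ℕ \ 2ⁿℕ⁺`, where `2ⁿℕ⁺` is the set of positive multiples of `2ⁿ`, whose
counting ratio tends to `2⁻ⁿ`. A pseudounion `U` has `Uᶜ ⊆ 2ⁿℕ⁺ ∪ (A n \ U)` with `A n \ U`
finite, and a finite set does not change the limit of the counting ratio, so
`d(Uᶜ) ≤ 2⁻ⁿ` for every `n`.
-/

open Filter Topology

noncomputable def countRatio (S : Set ℕ) (m : ℕ) : ℝ := ((S ∩ Set.Iic m).ncard : ℝ) / m

noncomputable def upperDensity (S : Set ℕ) : ℝ := limsup (countRatio S) atTop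

def nonzeroMultiples (d : ℕ) : Set ℕ := {k | d ∣ k ∧ k ≠ 0}

lemma countRatio_nonneg (S : Set ℕ) (m : ℕ) : 0 ≤ countRatio S m := by
  unfold countRatio; positivity

lemma countRatio_le_two (S : Set ℕ) (m : ℕ) : countRatio S m ≤ 2 := by
  rcases Nat.eq_zero_or_pos m with rfl | hm
  · simp [countRatio]
  have hcard : (S ∩ Set.Iic m).ncard ≤ m + 1 := by
    simpa using Set.ncard_le_ncard Set.inter_subset_right (Set.finite_Iic m)
  have hm1 : (1 : ℝ) ≤ m := by exact_mod_cast hm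
  rw [countRatio, div_le_iff₀ (by positivity)]
  have : ((S ∩ Set.Iic m).ncard : ℝ) ≤ m + 1 := by exact_mod_cast hcard
  linarith

lemma countRatio_mono {S T : Set ℕ} (h : S ⊆ T) (m : ℕ) : countRatio S m ≤ countRatio T m := by
  unfold countRatio
  gcongr
  exact (Set.finite_Iic m).inter_of_right _

lemma countRatio_union_le (S : Set ℕ) {F : Set ℕ} (hF : F.Finite) (m : ℕ) :
    countRatio (S ∪ F) m ≤ countRatio S m + (F.ncard : ℝ) / m := by
  have hsub : (S ∪ F) ∩ Set.Iic m ⊆ (S ∩ Set.Iic m) ∪ F := by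
    rintro k ⟨hS | hF, hm⟩
    exacts [Or.inl ⟨hS, hm⟩, Or.inr hF]
  have hcard : ((S ∪ F) ∩ Set.Iic m).ncard ≤ (S ∩ Set.Iic m).ncard + F.ncard :=
    (Set.ncard_le_ncard hsub (((Set.finite_Iic m).inter_of_right _).union hF)).trans
      (Set.ncard_union_le _ _)
  rw [countRatio, countRatio, ← add_div]
  gcongr
  exact_mod_cast hcard

lemma isBoundedUnder_le_countRatio (S : Set ℕ) : IsBoundedUnder (· ≤ ·) atTop (countRatio S) :=
  isBoundedUnder_of ⟨2, countRatio_le_two S⟩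

lemma isCoboundedUnder_le_countRatio (S : Set ℕ) :
    IsCoboundedUnder (· ≤ ·) atTop (countRatio S) :=
  (isBoundedUnder_of ⟨0, fun m => (countRatio_nonneg S m).ge⟩).isCoboundedUnder_le

lemma tendsto_countRatio_union_finite {S F : Set ℕ} {L : ℝ} (hF : F.Finite)
    (hS : Tendsto (countRatio S) atTop (𝓝 L)) :
    Tendsto (countRatio (S ∪ F)) atTop (𝓝 L) := by
  have hdiv : Tendsto (fun m : ℕ => (F.ncard : ℝ) / m) atTop (𝓝 0) :=
    tendsto_const_div_atTop_nhds_zero_nat _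
  exact tendsto_of_tendsto_of_tendsto_of_le_of_le hS (by simpa using hS.add hdiv)
    (countRatio_mono Set.subset_union_left) (countRatio_union_le S hF)

lemma upperDensity_nonneg (S : Set ℕ) : 0 ≤ upperDensity S :=
  le_limsup_of_frequently_le (Frequently.of_forall (countRatio_nonneg S))
    (isBoundedUnder_le_countRatio S)

lemma upperDensity_le_of_subset {S T : Set ℕ} {L : ℝ} (hST : S ⊆ T)
    (hT : Tendsto (countRatio T) atTop (𝓝 L)) : upperDensity S ≤ L := by
  rw [← hT.limsup_eq]
  exact limsup_le_limsup (Eventually.of_forall (countRatio_mono hST))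
    (isCoboundedUnder_le_countRatio S) hT.isBoundedUnder_le

lemma ncard_nonzeroMultiples_inter_Iic (d m : ℕ) :
    (nonzeroMultiples d ∩ Set.Iic m).ncard = m / d := by
  have : nonzeroMultiples d ∩ Set.Iic m = ↑((Finset.Ioc 0 m).filter (d ∣ ·)) := by
    ext k
    simp only [nonzeroMultiples, ne_eq, Set.mem_inter_iff, Set.mem_ofPred_eq, Set.mem_Iic,
      Finset.coe_filter, Finset.mem_Ioc, Nat.pos_iff_ne_zero]
    tauto
  rw [this, Set.ncard_coe_finset, Nat.Ioc_filter_dvd_card_eq_div]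

lemma tendsto_countRatio_nonzeroMultiples (d : ℕ) :
    Tendsto (countRatio (nonzeroMultiples d)) atTop (𝓝 (d : ℝ)⁻¹) := by
  have h := (tendsto_nat_floor_mul_div_atTop (inv_nonneg.2 (Nat.cast_nonneg (α := ℝ) d))).comp
    tendsto_natCast_atTop_atTop
  refine h.congr fun m => ?_
  simp only [Function.comp_apply, countRatio, ncard_nonzeroMultiples_inter_Iic, ← div_eq_inv_mul,
    Nat.floor_div_eq_div]

lemma nonzeroMultiples_subset_of_dvd {d e : ℕ} (h : d ∣ e) :
    nonzeroMultiples e ⊆ nonzeroMultiples d :=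
  fun _ ⟨he, hk⟩ => ⟨h.trans he, hk⟩

lemma iInter_nonzeroMultiples_pow {b : ℕ} (hb : 1 < b) : ⋂ n, nonzeroMultiples (b ^ n) = ∅ :=
  Set.eq_empty_of_forall_notMem fun k hk =>
    have ⟨hdvd, hk0⟩ := Set.mem_iInter.1 hk k
    (Nat.lt_pow_self hb).not_ge (Nat.le_of_dvd (Nat.pos_of_ne_zero hk0) hdvd)

/-- The density ideal `I_d = {A : d(A) = 0}` (upper natural density) does not satisfy
property (DL): there is an increasing sequence `(A_n)` with `A_n ↑ ℕ` and `ℕ \ A_n ∉ I_d`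
for every `n`, such that every pseudounion `U` of `(A_n)` has `d(ℕ \ U) = 0`. -/
theorem stmt_19 :
    ∃ A : ℕ → Set ℕ, Monotone A ∧ (⋃ n, A n) = Set.univ ∧
      (∀ n : ℕ,
        ¬ limsup (fun m : ℕ => (((A n)ᶜ ∩ Set.Iic m).ncard : ℝ) / (m : ℝ)) atTop = 0) ∧
      ∀ U : Set ℕ, (∀ n : ℕ, (A n \ U).Finite) →
        limsup (fun m : ℕ => ((Uᶜ ∩ Set.Iic m).ncard : ℝ) / (m : ℝ)) atTop = 0 := by
  refine ⟨fun n => (nonzeroMultiples (2 ^ n))ᶜ, ?_, ?_, ?_, ?_⟩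
  · exact fun n n' h => Set.compl_subset_compl.2 (nonzeroMultiples_subset_of_dvd (pow_dvd_pow 2 h))
  · rw [← Set.compl_iInter, iInter_nonzeroMultiples_pow one_lt_two, Set.compl_empty]
  · intro n
    simp only [compl_compl]
    exact (tendsto_countRatio_nonzeroMultiples _).limsup_eq.trans_ne (by positivity)
  · intro U hU
    have hsub (n : ℕ) : Uᶜ ⊆ nonzeroMultiples (2 ^ n) ∪ ((nonzeroMultiples (2 ^ n))ᶜ \ U) :=
      fun k hk => (em _).imp id fun h => ⟨h, hk⟩
    have hpow : Tendsto (fun n : ℕ => ((2 ^ n : ℕ) : ℝ)⁻¹) atTop (𝓝 0) :=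
      tendsto_inv_atTop_zero.comp
        (tendsto_natCast_atTop_atTop.comp (tendsto_pow_atTop_atTop_of_one_lt one_lt_two))
    refine le_antisymm (ge_of_tendsto' hpow fun n => ?_) (upperDensity_nonneg Uᶜ)
    exact upperDensity_le_of_subset (hsub n)
      (tendsto_countRatio_union_finite (hU n) (tendsto_countRatio_nonzeroMultiples _))
end
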